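/- arXiv:2508.09111 — 8 statements merged into one kernel-verified Lean document; each statement's English description precedes it below -/
import Mathlib

section
/- Let Q be a real N×N quasidominant matrix (with witness vector r), and let A be a real N×N diagonal matrix whose diagonal entries a_1,…,a_N are all strictly positive. Then the product A·Q is also quasidominant with the same witness vector r, and consequently every complex eigenvalue of A·Q has strictly positive real part (i.e., −A·Q is Hurwitz). -/
/-- If `Q` is quasidominant with witness `r` and `A = diagonal a` with `a i > 0`,
then `A * Q` is quasidominant with the same witness `r`, and every complex
eigenvalue of `A * Q` has strictly positive real part (`-A*Q` is Hurwitz). -/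
theorem diagonal_mul_quasidominant {N : ℕ} (Q : Matrix (Fin N) (Fin N) ℝ)
    (a : Fin N → ℝ) (ha : ∀ i, 0 < a i)
    (r : Fin N → ℝ) (hr : ∀ i, 0 < r i)
    (hq : ∀ i, ∑ j ∈ Finset.univ.erase i, r j * |Q i j| < r i * Q i i) :
    (∀ i, ∑ j ∈ Finset.univ.erase i, r j * |(Matrix.diagonal a * Q) i j| <
      r i * (Matrix.diagonal a * Q) i i) ∧
    (∀ μ ∈ spectrum ℂ ((Matrix.diagonal a * Q).map (algebraMap ℝ ℂ)), 0 < μ.re) := by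
  set B : Matrix (Fin N) (Fin N) ℝ := Matrix.diagonal a * Q with hB
  have hBij : ∀ i j, B i j = a i * Q i j := by
    intro i j; simp [hB, Matrix.diagonal_mul]
  have key : ∀ i, ∑ j ∈ Finset.univ.erase i, r j * |B i j| < r i * B i i := by
    intro i
    have : ∑ j ∈ Finset.univ.erase i, r j * |B i j|
        = a i * ∑ j ∈ Finset.univ.erase i, r j * |Q i j| := by
      rw [Finset.mul_sum]
      refine Finset.sum_congr rfl fun j _ => ?_
      rw [hBij, abs_mul, abs_of_pos (ha i)]; ring
    rw [this, hBij]
    have := mul_lt_mul_of_pos_left (hq i) (ha i)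
    linarith
  refine ⟨key, ?_⟩
  intro μ hμ
  set M : Matrix (Fin N) (Fin N) ℂ := B.map (algebraMap ℝ ℂ) with hM
  have hspec : μ ∈ spectrum ℂ (Matrix.toLinAlgEquiv' M) := by
    rwa [AlgEquiv.spectrum_eq]
  have heig : Module.End.HasEigenvalue (Matrix.toLinAlgEquiv' M) μ :=
    Module.End.hasEigenvalue_iff_mem_spectrum.mpr hspec
  obtain ⟨v, hv⟩ := heig.exists_hasEigenvector
  have hvec : ∀ i, ∑ j, M i j * v j = μ * v i := by
    intro i
    have := hv.apply_eq_smul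
    have h2 : M.mulVec v = μ • v := by
      simpa [Matrix.toLinAlgEquiv'_apply] using this
    have := congrFun h2 i
    simpa [Matrix.mulVec, dotProduct] using this
  have hvne : v ≠ 0 := hv.right
  obtain ⟨k, hk⟩ : ∃ k, v k ≠ 0 := by
    by_contra h
    push_neg at h
    exact hvne (funext h)
  obtain ⟨i, -, hmax⟩ := Finset.exists_max_image Finset.univ
    (fun j => ‖v j‖ / r j) ⟨k, Finset.mem_univ k⟩
  have hvi : 0 < ‖v i‖ := by
    have hk' : 0 < ‖v k‖ / r k := div_pos (by simpa using hk) (hr k)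
    have h : 0 < ‖v i‖ / r i := lt_of_lt_of_le hk' (hmax k (Finset.mem_univ k))
    have := mul_pos h (hr i)
    rwa [div_mul_cancel₀ _ (hr i).ne'] at this
  -- eigen equation rearranged
  have heq : (μ - (B i i : ℂ)) * v i = ∑ j ∈ Finset.univ.erase i, M i j * v j := by
    have h1 : ∑ j, M i j * v j = M i i * v i + ∑ j ∈ Finset.univ.erase i, M i j * v j := by
      rw [← Finset.add_sum_erase _ _ (Finset.mem_univ i)]
    have hMii : M i i = (B i i : ℂ) := by simp [hM]
    have := hvec i
    rw [h1, hMii] at this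
    linear_combination -this
  have hnorm : ‖μ - (B i i : ℂ)‖ * ‖v i‖ ≤
      (∑ j ∈ Finset.univ.erase i, r j * |B i j|) * (‖v i‖ / r i) := by
    calc ‖μ - (B i i : ℂ)‖ * ‖v i‖ = ‖(μ - (B i i : ℂ)) * v i‖ := (norm_mul _ _).symm
      _ = ‖∑ j ∈ Finset.univ.erase i, M i j * v j‖ := by rw [heq]
      _ ≤ ∑ j ∈ Finset.univ.erase i, ‖M i j * v j‖ := norm_sum_le _ _
      _ ≤ ∑ j ∈ Finset.univ.erase i, r j * |B i j| * (‖v i‖ / r i) := by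
          refine Finset.sum_le_sum fun j _ => ?_
          have hMij : ‖M i j‖ = |B i j| := by simp [hM, Complex.norm_real]
          rw [norm_mul, hMij]
          have hj : ‖v j‖ ≤ r j * (‖v i‖ / r i) := by
            have := hmax j (Finset.mem_univ j)
            calc ‖v j‖ = r j * (‖v j‖ / r j) := by
                  rw [mul_comm, div_mul_cancel₀ _ (hr j).ne']
              _ ≤ r j * (‖v i‖ / r i) := by
                  exact mul_le_mul_of_nonneg_left this (hr j).le
          calc |B i j| * ‖v j‖ ≤ |B i j| * (r j * (‖v i‖ / r i)) :=
                mul_le_mul_of_nonneg_left hj (abs_nonneg _)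
            _ = r j * |B i j| * (‖v i‖ / r i) := by ring
      _ = (∑ j ∈ Finset.univ.erase i, r j * |B i j|) * (‖v i‖ / r i) := by
          rw [← Finset.sum_mul]
  have hlt : ‖μ - (B i i : ℂ)‖ < B i i := by
    have hri := hr i
    have h2 : ‖μ - (B i i : ℂ)‖ * ‖v i‖ < B i i * ‖v i‖ := by
      calc ‖μ - (B i i : ℂ)‖ * ‖v i‖
          ≤ (∑ j ∈ Finset.univ.erase i, r j * |B i j|) * (‖v i‖ / r i) := hnorm
        _ < (r i * B i i) * (‖v i‖ / r i) := by
            exact mul_lt_mul_of_pos_right (key i) (div_pos hvi hri)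
        _ = B i i * ‖v i‖ := by field_simp
    exact lt_of_mul_lt_mul_right h2 (norm_nonneg _)
  have hre : B i i - μ.re ≤ ‖μ - (B i i : ℂ)‖ := by
    have : B i i - μ.re = ((B i i : ℂ) - μ).re := by simp
    rw [this]
    calc ((B i i : ℂ) - μ).re ≤ |((B i i : ℂ) - μ).re| := le_abs_self _
      _ ≤ ‖(B i i : ℂ) - μ‖ := Complex.abs_re_le_norm _
      _ = ‖μ - (B i i : ℂ)‖ := by rw [norm_sub_rev]
  linarith
end

section
/- Let J be the real 3×3 matrix with rows (1/10, −2, 1), (−2, 1/5, 4), (−3, −4, 17/10), and let A be the diagonal matrix diag(2, 1, 1). Then every complex eigenvalue of J has strictly positive real part (so −J is Hurwitz), but there exists a complex eigenvalue of the product A·J whose real part is not strictly positive (so −A·J is not Hurwitz). -/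
private lemma spec_iff_det (M : Matrix (Fin 3) (Fin 3) ℂ) (μ : ℂ) :
    μ ∈ spectrum ℂ M ↔ (Matrix.scalar (Fin 3) μ - M).det = 0 := by
  rw [spectrum.mem_iff, Matrix.isUnit_iff_isUnit_det, isUnit_iff_ne_zero, not_not]
  rfl

private lemma spec_J (μ : ℂ) :
    μ ∈ spectrum ℂ ((!![(1:ℝ)/10, -2, 1; -2, 1/5, 4; -3, -4, 17/10]).map (algebraMap ℝ ℂ)) ↔
      μ^3 - 2*μ^2 + (1553/100)*μ - 13717/500 = 0 := by
  rw [spec_iff_det, Matrix.det_fin_three]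
  simp [Matrix.scalar_apply, Matrix.diagonal_apply, Fin.ext_iff]
  norm_num
  constructor <;> intro h <;> linear_combination h

private lemma spec_AJ (μ : ℂ) :
    μ ∈ spectrum ℂ ((Matrix.diagonal ![(2:ℝ), 1, 1] *
          !![(1:ℝ)/10, -2, 1; -2, 1/5, 4; -3, -4, 17/10]).map (algebraMap ℝ ℂ)) ↔
      μ^3 - (21/10)*μ^2 + (368/25)*μ - 13717/250 = 0 := by
  rw [spec_iff_det, Matrix.det_fin_three]
  simp [Matrix.scalar_apply, Matrix.diagonal_apply, Matrix.mul_apply, Fin.sum_univ_three,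
    Fin.ext_iff]
  norm_num
  constructor <;> intro h <;> linear_combination h

private lemma sqrt_exists (z : ℂ) : ∃ w : ℂ, w^2 = z ∧ 0 ≤ w.re := by
  obtain ⟨w, hw⟩ := Complex.isAlgClosed.exists_pow_nat_eq z (by norm_num : 0 < 2)
  rcases le_or_gt 0 w.re with h | h
  · exact ⟨w, hw, h⟩
  · exact ⟨-w, by rw [neg_pow]; simpa using hw, by simpa using h.le⟩

/-- For the concrete matrix `J` below, `-J` is Hurwitz (all complex eigenvalues of
`J` have strictly positive real part), but for `A = diag(2,1,1)` the matrix
`-A*J` is not Hurwitz: some complex eigenvalue of `A*J` has nonpositive real part. -/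
theorem hurwitz_not_preserved_by_diagonal_scaling :
    (∀ μ ∈ spectrum ℂ
        ((!![(1:ℝ)/10, -2, 1; -2, 1/5, 4; -3, -4, 17/10]).map (algebraMap ℝ ℂ)),
      0 < μ.re) ∧
    (∃ μ ∈ spectrum ℂ
        ((Matrix.diagonal ![(2:ℝ), 1, 1] *
          !![(1:ℝ)/10, -2, 1; -2, 1/5, 4; -3, -4, 17/10]).map (algebraMap ℝ ℂ)),
      ¬ 0 < μ.re) := by
  constructor
  · intro μ hμ
    rw [spec_J] at hμ
    by_contra hle
    push_neg at hle
    have hre := congrArg Complex.re hμ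
    have him := congrArg Complex.im hμ
    simp [Complex.ext_iff, pow_succ, Complex.mul_re, Complex.mul_im] at hre him
    rcases eq_or_ne μ.im 0 with hb0 | hb0
    · rw [hb0] at hre
      nlinarith [sq_nonneg μ.re,
        mul_nonneg (mul_nonneg (neg_nonneg.2 hle) (neg_nonneg.2 hle)) (neg_nonneg.2 hle)]
    · have factor : μ.im * (3*μ.re^2 - μ.im^2 - 4*μ.re + 1553/100) = 0 := by
        linear_combination him
      have key : μ.im^2 = 3*μ.re^2 - 4*μ.re + 1553/100 := by
        rcases mul_eq_zero.1 factor with h' | h'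
        · exact absurd h' hb0
        · linarith
      nlinarith [hre, key, sq_nonneg μ.re, sq_nonneg μ.im,
        mul_nonneg (mul_nonneg (neg_nonneg.2 hle) (neg_nonneg.2 hle)) (neg_nonneg.2 hle)]
  · -- find the real root r ≥ 21/10 of the characteristic cubic of A*J
    have hroot : ∃ r : ℝ, 21/10 ≤ r ∧ r^3 - (21/10)*r^2 + (368/25)*r - 13717/250 = 0 := by
      set f : ℝ → ℝ := fun x => x^3 - (21/10)*x^2 + (368/25)*x - 13717/250 with hf
      have hcont : ContinuousOn f (Set.Icc (21/10) 10) := by fun_prop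
      have hsub := intermediate_value_Icc (by norm_num : (21/10:ℝ) ≤ 10) hcont
      have h0 : (0:ℝ) ∈ Set.Icc (f (21/10)) (f 10) := by
        simp only [hf]; norm_num
      obtain ⟨r, hr, hfr⟩ := hsub h0
      exact ⟨r, hr.1, hfr⟩
    obtain ⟨r, hr, hfr⟩ := hroot
    -- quadratic factor X² + bX + c over ℂ, with b = r - 21/10 ≥ 0
    set bC : ℂ := (r:ℂ) - 21/10 with hbdef
    set cC : ℂ := 368/25 + (r:ℂ) * bC with hcdef
    obtain ⟨w, hw, hwre⟩ := sqrt_exists (bC^2 - 4*cC)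
    refine ⟨(-bC - w)/2, ?_, ?_⟩
    · rw [spec_AJ]
      have hfrC : (r:ℂ)^3 - (21/10)*(r:ℂ)^2 + (368/25)*(r:ℂ) - 13717/250 = 0 := by
        have := congrArg (fun x : ℝ => (x : ℂ)) hfr
        push_cast at this
        linear_combination this
      linear_combination (((-bC - w)/2 - (r:ℂ))/4) * hw + hfrC
    · have hbre : (0:ℝ) ≤ bC.re := by simp [hbdef]; linarith
      have : ((-bC - w)/2).re = (-bC.re - w.re)/2 := by
        simp [Complex.div_re, Complex.normSq]
        try ring
      rw [this]
      push_neg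
      linarith
end

section
/- Under the game setup below, suppose the quasidominance condition holds with witness vector r. Then the game is strictly monotone: there exist constants λ_1,…,λ_N > 0 such that for all x, y ∈ ∏_i 𝒳_i with x ≠ y, Σ_{i=1}^{N} λ_i · ⟨G_i(x) − G_i(y), x_i − y_i⟩ > 0. -/
/-!
Write `a i = ‖x i - y i‖`. Moving from `x` to `y` first in coordinate `i` (strong monotonicity)
and then in the other coordinates one at a time (Lipschitz cross effects) gives
`⟪G i x - G i y, x i - y i⟫ ≥ μ i * a i ^ 2 - a i * ∑ j ≠ i, L i j * a j`, so it suffices to make the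
quadratic form of the Z-matrix `diag μ - (L i j)_{j ≠ i}` positive with a positive diagonal weight.
Quasidominance says that, after rescaling by `r`, the nonnegative matrix
`A i j = r j * L i j / (r i * μ i)` has row sums `< 1`; its Neumann series then gives `p ≥ 1` with
`pᵀ (1 - A) = 𝟙ᵀ`. With `λ i = p i / (μ i * r i ^ 2)` and `b = a / r`, the form is
`∑ p i * b i ^ 2 - ∑ p i * A i j * b i * b j`, and bounding `b i * b j ≤ (b i ^ 2 + b j ^ 2) / 2`
by the row sums (`≤ p i`) and column sums (`= p j - 1`) of `p i * A i j` leaves `∑ b i ^ 2 / 2`.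
-/

open scoped RealInnerProductSpace

open Finset

namespace Matrix

section
attribute [local instance] Matrix.linftyOpNormedRing Matrix.linftyOpNormedAlgebra

variable {ι : Type*} [Fintype ι] [DecidableEq ι]

theorem linfty_opNorm_lt_one_of_nonneg {A : Matrix ι ι ℝ} (hA : ∀ i j, 0 ≤ A i j)
    (hrow : ∀ i, ∑ j, A i j < 1) : ‖A‖ < 1 := by
  rw [linfty_opNorm_def, NNReal.coe_lt_one, Finset.sup_lt_iff one_pos]
  intro i _
  rw [← NNReal.coe_lt_one, NNReal.coe_sum]
  simpa [abs_of_nonneg (hA i _)] using hrow i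

/-- Neumann series: `p = 𝟙ᵀ (1 - A)⁻¹ = ∑ₖ 𝟙ᵀ Aᵏ`. -/
theorem exists_one_le_vecMul_eq_sub_one {A : Matrix ι ι ℝ} (hA : ∀ i j, 0 ≤ A i j)
    (hrow : ∀ i, ∑ j, A i j < 1) : ∃ p : ι → ℝ, (∀ j, 1 ≤ p j) ∧ p ᵥ* A = p - 1 := by
  -- not found by instance search: the `linfty` uniformity is not reducibly the product one
  have : CompleteSpace (Matrix ι ι ℝ) := FiniteDimensional.complete ℝ _
  have hnorm := linfty_opNorm_lt_one_of_nonneg hA hrow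
  set S := ∑' k : ℕ, A ^ k
  have hS : S = 1 + S * A := by
    have := geom_series_mul_neg A hnorm
    rwa [mul_sub, mul_one, sub_eq_iff_eq_add] at this
  have hS0 : ∀ i j, 0 ≤ S i j := fun i j =>
    (Pi.hasSum.mp (Pi.hasSum.mp (summable_geometric_of_norm_lt_one hnorm).hasSum i) j).nonneg
      fun k => pow_apply_nonneg hA k i j
  refine ⟨1 ᵥ* S, fun j => ?_, ?_⟩
  · have hSA : 0 ≤ (S * A) j j := sum_nonneg fun l _ => mul_nonneg (hS0 j l) (hA l j)
    calc (1 : ℝ) ≤ S j j := by rw [hS, add_apply, one_apply_eq]; linarith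
      _ ≤ (1 ᵥ* S) j := by
        simpa [vecMul, dotProduct] using single_le_sum (fun i _ => hS0 i j) (mem_univ j)
  · rw [vecMul_vecMul, eq_sub_of_add_eq' hS.symm, vecMul_sub, vecMul_one]

end

end Matrix

theorem sum_sum_mul_mul_le_of_rowSum_le_of_colSum_le {ι : Type*} [Fintype ι]
    {c : ι → ι → ℝ} (hc : ∀ i j, 0 ≤ c i j) {α β : ι → ℝ}
    (hα : ∀ i, ∑ j, c i j ≤ α i) (hβ : ∀ j, ∑ i, c i j ≤ β j) (b : ι → ℝ) :
    ∑ i, ∑ j, c i j * (b i * b j) ≤ ∑ i, (α i + β i) / 2 * b i ^ 2 := by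
  calc ∑ i, ∑ j, c i j * (b i * b j)
      ≤ ∑ i, ∑ j, (c i j * b i ^ 2 + c i j * b j ^ 2) / 2 := by
        gcongr with i _ j _
        nlinarith [hc i j, mul_nonneg (hc i j) (sq_nonneg (b i - b j))]
    _ = ∑ i, ((∑ j, c i j) * b i ^ 2 + (∑ j, c j i) * b i ^ 2) / 2 := by
        simp only [← sum_div, sum_add_distrib, sum_mul]
        rw [sum_comm (f := fun i j => c i j * b j ^ 2)]
    _ ≤ ∑ i, (α i + β i) / 2 * b i ^ 2 := by
        gcongr with i
        nlinarith [hα i, hβ i, sq_nonneg (b i)]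

theorem exists_pos_weights_of_quasidominant {ι : Type*} [Fintype ι] [DecidableEq ι]
    {μ : ι → ℝ} (hμ : ∀ i, 0 < μ i) {K : Matrix ι ι ℝ} (hK : ∀ i j, 0 ≤ K i j)
    {r : ι → ℝ} (hr : ∀ i, 0 < r i) (hq : ∀ i, ∑ j, r j * K i j < r i * μ i) :
    ∃ lam : ι → ℝ, (∀ i, 0 < lam i) ∧ ∀ a : ι → ℝ, a ≠ 0 →
      0 < ∑ i, lam i * (μ i * a i ^ 2 - (∑ j, K i j * a j) * a i) := by
  set A : Matrix ι ι ℝ := Matrix.of fun i j => r j * K i j / (r i * μ i)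
  have hA : ∀ i j, 0 ≤ A i j := fun i j =>
    div_nonneg (mul_nonneg (hr j).le (hK i j)) (mul_pos (hr i) (hμ i)).le
  have hrow : ∀ i, ∑ j, A i j < 1 := fun i => by
    simpa only [A, Matrix.of_apply, ← sum_div, div_lt_one (mul_pos (hr i) (hμ i))] using hq i
  obtain ⟨p, hp1, hpA⟩ := Matrix.exists_one_le_vecMul_eq_sub_one hA hrow
  have hp : ∀ i, 0 < p i := fun i => one_pos.trans_le (hp1 i)
  refine ⟨fun i => p i / (μ i * r i ^ 2),
    fun i => div_pos (hp i) (mul_pos (hμ i) (pow_pos (hr i) 2)), fun a ha => ?_⟩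
  set b : ι → ℝ := fun i => a i / r i
  have hterm : ∀ i, p i / (μ i * r i ^ 2) * (μ i * a i ^ 2 - (∑ j, K i j * a j) * a i)
      = p i * b i ^ 2 - ∑ j, p i * A i j * (b i * b j) := fun i => by
    have := (hμ i).ne'
    have := (hr i).ne'
    simp only [b, A, Matrix.of_apply, sum_mul, mul_sub, mul_sum]
    congr 1
    · field_simp
    · refine sum_congr rfl fun j _ => ?_
      have := (hr j).ne'
      field_simp
  have hcross := sum_sum_mul_mul_le_of_rowSum_le_of_colSum_le (c := fun i j => p i * A i j)
    (fun i j => mul_nonneg (hp i).le (hA i j)) (α := p) (β := p - 1)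
    (fun i => by simpa only [← mul_sum] using mul_le_of_le_one_right (hp i).le (hrow i).le)
    (fun j => by simpa [Matrix.vecMul, dotProduct] using (congrFun hpA j).le) b
  have hb : 0 < ∑ i, b i ^ 2 := by
    obtain ⟨i, hi⟩ := Function.ne_iff.mp ha
    have hbi : b i ≠ 0 := div_ne_zero hi (hr i).ne'
    exact sum_pos' (fun i _ => sq_nonneg _) ⟨i, mem_univ i, by positivity⟩
  calc 0 < ∑ i, b i ^ 2 / 2 := by rw [← sum_div]; positivity
    _ = ∑ i, p i * b i ^ 2 - ∑ i, (p i + (p - 1) i) / 2 * b i ^ 2 := by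
        rw [← sum_sub_distrib]; congr! 1 with i; simp only [Pi.sub_apply, Pi.one_apply]; ring
    _ ≤ ∑ i, p i * b i ^ 2 - ∑ i, ∑ j, p i * A i j * (b i * b j) := by linarith
    _ = _ := by simp only [hterm, sum_sub_distrib]

theorem dist_le_sum_mul_dist_of_update {ι : Type*} [Fintype ι] [DecidableEq ι]
    {E : ι → Type*} [∀ i, PseudoMetricSpace (E i)] {F : Type*} [PseudoMetricSpace F]
    (S : ∀ i, Set (E i)) (f : (∀ i, E i) → F) (c : ι → ℝ)
    (hf : ∀ x : ∀ i, E i, (∀ k, x k ∈ S k) → ∀ j, ∀ z ∈ S j,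
      dist (f x) (f (Function.update x j z)) ≤ c j * dist (x j) z)
    {x y : ∀ i, E i} (hx : ∀ k, x k ∈ S k) (hy : ∀ k, y k ∈ S k) :
    dist (f x) (f y) ≤ ∑ j, c j * dist (x j) (y j) := by
  suffices h : ∀ s : Finset ι,
      dist (f x) (f (s.piecewise y x)) ≤ ∑ j ∈ s, c j * dist (x j) (y j) by
    simpa using h univ
  intro s
  induction s using Finset.induction_on with
  | empty => simp
  | insert j s hj ih =>
    have hmem : ∀ k, s.piecewise y x k ∈ S k := fun k =>
      s.piecewise_cases y x (· ∈ S k) (hy k) (hx k)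
    rw [piecewise_insert, sum_insert hj]
    calc dist (f x) (f (Function.update (s.piecewise y x) j (y j)))
        ≤ dist (f x) (f (s.piecewise y x))
          + dist (f (s.piecewise y x)) (f (Function.update (s.piecewise y x) j (y j))) :=
          dist_triangle _ _ _
      _ ≤ ∑ k ∈ s, c k * dist (x k) (y k) + c j * dist (x j) (y j) := by
          gcongr
          simpa [piecewise_eq_of_notMem _ _ _ hj] using hf _ hmem j (y j) (hy j)
      _ = _ := add_comm _ _

theorem mul_sq_sub_le_inner_sub {ι E : Type*} [Fintype ι] [DecidableEq ι]
    [NormedAddCommGroup E] [InnerProductSpace ℝ E]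
    (S : ι → Set E) (G : (ι → E) → E) (μ : ℝ) (L : ι → ℝ) (i : ι)
    (hmono : ∀ x : ι → E, (∀ j, x j ∈ S j) →
      ∀ z ∈ S i, μ * ‖x i - z‖ ^ 2 ≤ ⟪G x - G (Function.update x i z), x i - z⟫)
    (hlip : ∀ j (x : ι → E), (∀ k, x k ∈ S k) →
      ∀ z ∈ S j, ‖G x - G (Function.update x j z)‖ ≤ L j * ‖x j - z‖)
    {x y : ι → E} (hx : ∀ j, x j ∈ S j) (hy : ∀ j, y j ∈ S j) :
    μ * ‖x i - y i‖ ^ 2 - (∑ j ∈ univ.erase i, L j * ‖x j - y j‖) * ‖x i - y i‖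
      ≤ ⟪G x - G y, x i - y i⟫ := by
  set x' := Function.update x i (y i)
  have hx' : ∀ j, x' j ∈ S j := fun j => by
    by_cases h : j = i
    · subst h; simpa [x'] using hy j
    · simpa [x', h] using hx j
  have hcross : ‖G x' - G y‖ ≤ ∑ j ∈ univ.erase i, L j * ‖x j - y j‖ :=
    calc ‖G x' - G y‖ ≤ ∑ j, L j * ‖x' j - y j‖ := by
          simpa only [dist_eq_norm] using dist_le_sum_mul_dist_of_update S G L
            (fun x hx j z hz => by simpa only [dist_eq_norm] using hlip j x hx z hz) hx' hy
      _ = ∑ j ∈ univ.erase i, L j * ‖x' j - y j‖ := (sum_erase _ (by simp [x'])).symm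
      _ = _ := sum_congr rfl fun j hj => by simp [x', ne_of_mem_erase hj]
  calc μ * ‖x i - y i‖ ^ 2 - (∑ j ∈ univ.erase i, L j * ‖x j - y j‖) * ‖x i - y i‖
      ≤ ⟪G x - G x', x i - y i⟫ - ‖G x' - G y‖ * ‖x i - y i‖ := by
        gcongr
        exact hmono x hx (y i) (hy i)
    _ ≤ ⟪G x - G x', x i - y i⟫ + ⟪G x' - G y, x i - y i⟫ := by
        linarith [neg_le_of_abs_le (abs_real_inner_le_norm (G x' - G y) (x i - y i))]
    _ = ⟪G x - G y, x i - y i⟫ := by rw [← inner_add_left, sub_add_sub_cancel]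

theorem quasidominant_game_strictly_monotone_general {N d : ℕ}
    (𝒳 : Fin N → Set (EuclideanSpace ℝ (Fin d)))
    (G : Fin N → (Fin N → EuclideanSpace ℝ (Fin d)) → EuclideanSpace ℝ (Fin d))
    (μ : Fin N → ℝ) (hμ : ∀ i, 0 < μ i)
    (hmono : ∀ i (x : Fin N → EuclideanSpace ℝ (Fin d)), (∀ j, x j ∈ 𝒳 j) →
      ∀ yi ∈ 𝒳 i, μ i * ‖x i - yi‖ ^ 2 ≤ ⟪G i x - G i (Function.update x i yi), x i - yi⟫)
    (L : Fin N → Fin N → ℝ) (hL : ∀ i j, 0 ≤ L i j)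
    (hlip : ∀ i j (x : Fin N → EuclideanSpace ℝ (Fin d)), (∀ k, x k ∈ 𝒳 k) →
      ∀ yj ∈ 𝒳 j, ‖G i x - G i (Function.update x j yj)‖ ≤ L i j * ‖x j - yj‖)
    (r : Fin N → ℝ) (hr : ∀ i, 0 < r i)
    (hq : ∀ i, ∑ j ∈ Finset.univ.erase i, r j * L i j < r i * μ i) :
    ∃ lam : Fin N → ℝ, (∀ i, 0 < lam i) ∧
      ∀ x y : Fin N → EuclideanSpace ℝ (Fin d),
        (∀ j, x j ∈ 𝒳 j) → (∀ j, y j ∈ 𝒳 j) → x ≠ y →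
        0 < ∑ i, lam i * ⟪G i x - G i y, x i - y i⟫ := by
  set K : Matrix (Fin N) (Fin N) ℝ := fun i j => if j = i then 0 else L i j
  have hK : ∀ i (f : Fin N → ℝ), ∑ j, f j * K i j = ∑ j ∈ univ.erase i, f j * L i j := by
    intro i f
    simp [K, mul_ite, sum_ite, filter_ne']
  obtain ⟨lam, hlam, hpos⟩ := exists_pos_weights_of_quasidominant hμ
    (fun i j => by by_cases h : j = i <;> simp [K, h, hL i j])
    hr (fun i => (hK i r).trans_lt (hq i))
  refine ⟨lam, hlam, fun x y hx hy hxy => ?_⟩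
  have ha : (fun j => ‖x j - y j‖) ≠ 0 := fun h =>
    hxy (funext fun j => sub_eq_zero.mp (norm_eq_zero.mp (congrFun h j)))
  refine (hpos _ ha).trans_le (sum_le_sum fun i _ => mul_le_mul_of_nonneg_left ?_ (hlam i).le)
  simpa only [mul_comm (K i _), hK, mul_comm _ (L i _)] using
    mul_sq_sub_le_inner_sub 𝒳 (G i) (μ i) (L i) i (hmono i) (hlip i) hx hy

/-- Quasidominance implies strict monotonicity of the game: there are positive
weights `λ i` such that `∑ i, λ i ⟪G i x - G i y, x i - y i⟫ > 0` for all
distinct action profiles `x ≠ y` in the joint action set. -/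
theorem quasidominant_game_strictly_monotone {N d : ℕ}
    (𝒳 : Fin N → Set (EuclideanSpace ℝ (Fin d)))
    (hclosed : ∀ i, IsClosed (𝒳 i)) (hconvex : ∀ i, Convex ℝ (𝒳 i))
    (G : Fin N → (Fin N → EuclideanSpace ℝ (Fin d)) → EuclideanSpace ℝ (Fin d))
    (μ : Fin N → ℝ) (hμ : ∀ i, 0 < μ i)
    (hmono : ∀ i (x : Fin N → EuclideanSpace ℝ (Fin d)), (∀ j, x j ∈ 𝒳 j) →
      ∀ yi ∈ 𝒳 i, μ i * ‖x i - yi‖ ^ 2 ≤ ⟪G i x - G i (Function.update x i yi), x i - yi⟫)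
    (L : Fin N → Fin N → ℝ) (hL : ∀ i j, 0 ≤ L i j)
    (hlip : ∀ i j (x : Fin N → EuclideanSpace ℝ (Fin d)), (∀ k, x k ∈ 𝒳 k) →
      ∀ yj ∈ 𝒳 j, ‖G i x - G i (Function.update x j yj)‖ ≤ L i j * ‖x j - yj‖)
    (r : Fin N → ℝ) (hr : ∀ i, 0 < r i)
    (hq : ∀ i, ∑ j ∈ Finset.univ.erase i, r j * L i j < r i * μ i) :
    ∃ lam : Fin N → ℝ, (∀ i, 0 < lam i) ∧
      ∀ x y : Fin N → EuclideanSpace ℝ (Fin d),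
        (∀ j, x j ∈ 𝒳 j) → (∀ j, y j ∈ 𝒳 j) → x ≠ y →
        0 < ∑ i, lam i * ⟪G i x - G i y, x i - y i⟫ :=
  quasidominant_game_strictly_monotone_general 𝒳 G μ hμ hmono L hL hlip r hr hq
end

section
/- Under the game setup below, let x* ∈ ∏_i 𝒳_i satisfy the Nash equilibrium variational inequality ⟨G_i(x*), z − x_i*⟩ ≥ 0 for every z ∈ 𝒳_i and every i. Then for every x ∈ ∏_j 𝒳_j and every agent i, ⟨x_i − x_i*, G_i(x)⟩ ≥ μ_i‖x_i − x_i*‖² − ‖x_i − x_i*‖ · Σ_{j≠i} L_{ij}‖x_j − x_j*‖. -/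
open scoped RealInnerProductSpace

/-- Key gradient inequality at a Nash equilibrium: if `x*` satisfies the Nash
variational inequality, then for every feasible profile `x` and every agent `i`,
`⟪x i - x* i, G i x⟫ ≥ μ i ‖x i - x* i‖² - ‖x i - x* i‖ ∑_{j≠i} L i j ‖x j - x* j‖`. -/
theorem nash_gradient_lower_bound {N d : ℕ}
    (𝒳 : Fin N → Set (EuclideanSpace ℝ (Fin d)))
    (hclosed : ∀ i, IsClosed (𝒳 i)) (hconvex : ∀ i, Convex ℝ (𝒳 i))
    (G : Fin N → (Fin N → EuclideanSpace ℝ (Fin d)) → EuclideanSpace ℝ (Fin d))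
    (μ : Fin N → ℝ) (hμ : ∀ i, 0 < μ i)
    (hmono : ∀ i (x : Fin N → EuclideanSpace ℝ (Fin d)), (∀ j, x j ∈ 𝒳 j) →
      ∀ yi ∈ 𝒳 i, μ i * ‖x i - yi‖ ^ 2 ≤ ⟪G i x - G i (Function.update x i yi), x i - yi⟫)
    (L : Fin N → Fin N → ℝ) (hL : ∀ i j, 0 ≤ L i j)
    (hlip : ∀ i j (x : Fin N → EuclideanSpace ℝ (Fin d)), (∀ k, x k ∈ 𝒳 k) →
      ∀ yj ∈ 𝒳 j, ‖G i x - G i (Function.update x j yj)‖ ≤ L i j * ‖x j - yj‖)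
    (xstar : Fin N → EuclideanSpace ℝ (Fin d)) (hxstar : ∀ i, xstar i ∈ 𝒳 i)
    (hnash : ∀ i, ∀ z ∈ 𝒳 i, 0 ≤ ⟪G i xstar, z - xstar i⟫) :
    ∀ (x : Fin N → EuclideanSpace ℝ (Fin d)), (∀ j, x j ∈ 𝒳 j) → ∀ i,
      μ i * ‖x i - xstar i‖ ^ 2 -
        ‖x i - xstar i‖ * ∑ j ∈ Finset.univ.erase i, L i j * ‖x j - xstar j‖ ≤
      ⟪x i - xstar i, G i x⟫ := by
  intro x hx i
  -- hybrid profiles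
  have key : ∀ T : Finset (Fin N),
      ‖G i (fun j => if j ∈ T then x j else xstar j) - G i xstar‖ ≤
        ∑ j ∈ T, L i j * ‖x j - xstar j‖ := by
    intro T
    induction T using Finset.induction_on with
    | empty => simp
    | @insert a s ha ih =>
      set zs : Fin N → EuclideanSpace ℝ (Fin d) :=
        fun j => if j ∈ s then x j else xstar j with hzs
      set za : Fin N → EuclideanSpace ℝ (Fin d) :=
        fun j => if j ∈ insert a s then x j else xstar j with hza
      have hfeas : ∀ k, za k ∈ 𝒳 k := by
        intro k
        simp only [hza]
        split
        · exact hx k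
        · exact hxstar k
      have hupd : Function.update za a (xstar a) = zs := by
        funext j
        by_cases hj : j = a
        · subst hj
          simp [Function.update_self, hzs, ha]
        · simp [Function.update_of_ne hj, hza, hzs, Finset.mem_insert, hj]
      have h1 : ‖G i za - G i zs‖ ≤ L i a * ‖x a - xstar a‖ := by
        have := hlip i a za hfeas (xstar a) (hxstar a)
        rw [hupd] at this
        have hzaa : za a = x a := by simp [hza]
        rwa [hzaa] at this
      calc ‖G i za - G i xstar‖ ≤ ‖G i za - G i zs‖ + ‖G i zs - G i xstar‖ :=
            norm_sub_le_norm_sub_add_norm_sub _ _ _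
        _ ≤ L i a * ‖x a - xstar a‖ + ∑ j ∈ s, L i j * ‖x j - xstar j‖ :=
            add_le_add h1 ih
        _ = ∑ j ∈ insert a s, L i j * ‖x j - xstar j‖ :=
            by rw [Finset.sum_insert ha]
  -- the profile y = update x i (xstar i)
  set y : Fin N → EuclideanSpace ℝ (Fin d) := Function.update x i (xstar i) with hy
  have hy_eq : y = fun j => if j ∈ Finset.univ.erase i then x j else xstar j := by
    funext j
    by_cases hj : j = i
    · subst hj; simp [hy]
    · simp [hy, Function.update_of_ne hj, Finset.mem_erase, hj]
  have hGy : ‖G i y - G i xstar‖ ≤ ∑ j ∈ Finset.univ.erase i, L i j * ‖x j - xstar j‖ := by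
    rw [hy_eq]; exact key _
  have h2 : ⟪x i - xstar i, G i y - G i xstar⟫ ≥
      -(‖x i - xstar i‖ * ∑ j ∈ Finset.univ.erase i, L i j * ‖x j - xstar j‖) := by
    have habs := abs_real_inner_le_norm (x i - xstar i) (G i y - G i xstar)
    have := neg_abs_le ⟪x i - xstar i, G i y - G i xstar⟫
    have hb : ‖x i - xstar i‖ * ‖G i y - G i xstar‖ ≤
        ‖x i - xstar i‖ * ∑ j ∈ Finset.univ.erase i, L i j * ‖x j - xstar j‖ :=
      mul_le_mul_of_nonneg_left hGy (norm_nonneg _)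
    linarith
  have h1 : μ i * ‖x i - xstar i‖ ^ 2 ≤ ⟪x i - xstar i, G i x - G i y⟫ := by
    have := hmono i x hx (xstar i) (hxstar i)
    rwa [real_inner_comm] at this
  have h3 : 0 ≤ ⟪x i - xstar i, G i xstar⟫ := by
    have := hnash i (x i) (hx i)
    rwa [real_inner_comm] at this
  have hsplit : ⟪x i - xstar i, G i x⟫ =
      ⟪x i - xstar i, G i x - G i y⟫ + ⟪x i - xstar i, G i y - G i xstar⟫ +
        ⟪x i - xstar i, G i xstar⟫ := by
    simp only [inner_sub_right]
    ring
  linarith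
end

section
/- Let ε > 0, c ≥ 0, let H ≥ 2 be a natural number, and set η = ln(H)/(ε·H). Let (V_k)_{k≥0} be a sequence of nonnegative reals satisfying V_{k+1} ≤ (1 − 2ηε)V_k + η²c for all 0 ≤ k < H. Then V_H ≤ V_0/H² + c·ln(H)/(2ε²H). -/
/-- Last-iterate bound from the per-window descent recursion with step size
`η = ln H / (ε H)`: if `V (k+1) ≤ (1 - 2ηε) V k + η² c` for all `k < H`, then
`V H ≤ V 0 / H² + c ln H / (2 ε² H)`. -/
theorem descent_recursion_last_iterate_bound (ε c : ℝ) (hε : 0 < ε) (hc : 0 ≤ c)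
    (H : ℕ) (hH : 2 ≤ H) (η : ℝ) (hη : η = Real.log H / (ε * H))
    (V : ℕ → ℝ) (hV : ∀ k, 0 ≤ V k)
    (hrec : ∀ k < H, V (k + 1) ≤ (1 - 2 * η * ε) * V k + η ^ 2 * c) :
    V H ≤ V 0 / H ^ 2 + c * Real.log H / (2 * ε ^ 2 * H) := by
  have hH2 : (2:ℝ) ≤ (H:ℝ) := by exact_mod_cast hH
  have hHpos : (0:ℝ) < H := by linarith
  have hlogpos : 0 < Real.log H := Real.log_pos (by linarith)
  have hηpos : 0 < η := by rw [hη]; positivity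
  -- log H < H / 2
  have hsqrt : (0:ℝ) < Real.sqrt H := Real.sqrt_pos.mpr hHpos
  have hsq : Real.sqrt H * Real.sqrt H = (H:ℝ) := Real.mul_self_sqrt (le_of_lt hHpos)
  have hsne : Real.sqrt H ≠ 1 := by
    intro h
    rw [h] at hsq
    linarith
  have h1 : Real.log (Real.sqrt H) < Real.sqrt H - 1 :=
    Real.log_lt_sub_one_of_pos hsqrt hsne
  have h2 : Real.log (Real.sqrt H) = Real.log H / 2 := Real.log_sqrt (le_of_lt hHpos)
  have hlog_lt : Real.log H < (H:ℝ) / 2 := by nlinarith [sq_nonneg (Real.sqrt H - 2)]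
  have hηε : η * ε = Real.log H / H := by
    rw [hη]; field_simp
  have hrpos : 0 < 1 - 2 * η * ε := by
    have h2e : 2 * η * ε = 2 * (Real.log H / H) := by rw [mul_assoc, hηε]
    have hd : Real.log H / H < 1 / 2 := by
      rw [div_lt_div_iff₀ hHpos two_pos]; linarith
    rw [h2e]; linarith
  set r := 1 - 2 * η * ε with hr
  have hrlt : r < 1 := by
    have : 0 < 2 * η * ε := by positivity
    simp only [hr]; linarith
  -- induction
  have key : ∀ n, n ≤ H → V n ≤ r ^ n * V 0 + (∑ k ∈ Finset.range n, r ^ k) * (η ^ 2 * c) := by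
    intro n
    induction n with
    | zero => intro _; simp
    | succ m ih =>
      intro hm
      have hmH : m < H := hm
      have ihm := ih (le_of_lt hmH)
      have hrec' := hrec m hmH
      calc V (m + 1) ≤ r * V m + η ^ 2 * c := hrec'
        _ ≤ r * (r ^ m * V 0 + (∑ k ∈ Finset.range m, r ^ k) * (η ^ 2 * c)) + η ^ 2 * c := by
            have := mul_le_mul_of_nonneg_left ihm (le_of_lt hrpos)
            linarith
        _ = r ^ (m + 1) * V 0 + (∑ k ∈ Finset.range (m + 1), r ^ k) * (η ^ 2 * c) := by
            rw [geom_sum_succ]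
            ring
  have hmain := key H le_rfl
  -- bound r ^ H ≤ 1 / H ^ 2
  have hexp : r ≤ Real.exp (-(2 * η * ε)) := by
    have := Real.add_one_le_exp (-(2 * η * ε))
    simp only [hr]; linarith
  have hpow : r ^ H ≤ Real.exp (-(2 * η * ε)) ^ H :=
    pow_le_pow_left₀ (le_of_lt hrpos) hexp H
  have hexpH : Real.exp (-(2 * η * ε)) ^ H = Real.exp (-(2 * Real.log H)) := by
    rw [← Real.exp_nat_mul]
    congr 1
    have hh : (H:ℝ) * (η * ε) = Real.log H := by
      rw [hηε]; field_simp
    nlinarith [hh]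
  have hexplog : Real.exp (-(2 * Real.log H)) = 1 / (H:ℝ) ^ 2 := by
    rw [Real.exp_neg, show (2:ℝ) * Real.log H = Real.log H + Real.log H by ring, Real.exp_add,
      Real.exp_log hHpos]
    ring
  have hpow2 : r ^ H ≤ 1 / (H:ℝ) ^ 2 := by rw [← hexplog, ← hexpH]; exact hpow
  -- bound sum
  have hsum : (∑ k ∈ Finset.range H, r ^ k) ≤ 1 / (2 * η * ε) := by
    have h2 : 0 < 2 * η * ε := by positivity
    have hrH : 0 ≤ r ^ H := pow_nonneg (le_of_lt hrpos) H
    have e : (r ^ H - 1) / (r - 1) = (1 - r ^ H) / (2 * η * ε) := by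
      have hr1 : r - 1 = -(2 * η * ε) := by rw [hr]; ring
      rw [hr1, div_neg, ← neg_div, neg_sub]
    rw [geom_sum_eq (ne_of_lt hrlt), e, div_le_div_iff₀ h2 h2]
    nlinarith
  -- combine
  have hfin : V H ≤ (1 / (H:ℝ) ^ 2) * V 0 + (1 / (2 * η * ε)) * (η ^ 2 * c) := by
    have hV0 := hV 0
    have hηc : 0 ≤ η ^ 2 * c := by positivity
    calc V H ≤ r ^ H * V 0 + (∑ k ∈ Finset.range H, r ^ k) * (η ^ 2 * c) := hmain
      _ ≤ (1 / (H:ℝ) ^ 2) * V 0 + (1 / (2 * η * ε)) * (η ^ 2 * c) := by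
          gcongr
  have heq : (1 / (2 * η * ε)) * (η ^ 2 * c) = c * Real.log H / (2 * ε ^ 2 * H) := by
    rw [hη]; field_simp
  rw [heq] at hfin
  calc V H ≤ (1 / (H:ℝ) ^ 2) * V 0 + c * Real.log H / (2 * ε ^ 2 * H) := hfin
    _ = V 0 / (H:ℝ) ^ 2 + c * Real.log H / (2 * ε ^ 2 * H) := by ring
end

section
/- First-order asynchronous learning (Theorem 1). Under the game setup below, assume additionally: each 𝒳_i is compact with diameter at most D; ‖G_i(x)‖ ≤ U for all x ∈ ∏_j 𝒳_j and all i; x* ∈ ∏_i 𝒳_i satisfies the Nash variational inequality ⟨G_i(x*), z − x_i*⟩ ≥ 0 for all z ∈ 𝒳_i and all i; and the quasidominance condition holds with witness r, with ε := min_i (μ_i − (1/r_i)Σ_{j≠i} r_j L_{ij}) > 0. Then there exists a constant C > 0, depending only on N, d, D, U, (μ_i), (L_{ij}), (r_i) (and not on T, B, the update schedules, or the initialization), such that the following holds: for every integer B ≥ 1, every family of update-time sets 𝕋^1,…,𝕋^N ⊆ ℕ such that every interval [t, t+B) contains at least one element of each 𝕋^i (partial asynchronism), every T that is a multiple of B with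 T ≥ 2B, and every initialization x_{i,1} ∈ 𝒳_i, the asynchronous projected gradient iterates defined by x_{i,t+1} = P_{𝒳_i}(x_{i,t} − η·G_i(x_t)) if t ∈ 𝕋^i and x_{i,t+1} = x_{i,t} otherwise, with step size η = B·ln(T/B)/(ε·T), satisfy max_i ‖x_{i,T} − x_i*‖² ≤ C·B³·ln(T/B)/T. -/
/-!
Weight the distance of agent `j` to the equilibrium by `1 / r j` and follow the potential
`Φ t = max_j ‖x t j - xs j‖ / r j`. Comparing a projected gradient step of agent `i` with the
step from `xs` (which the projection fixes), strong monotonicity gains `μ i` while the cross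
effects lose at most `∑_{j ≠ i} L i j r j / r i ≤ μ i - ε`, so an updating agent lands within
`(1 - 2ηε) Φ² + O(η²)` and idle agents stay put. Partial asynchronism makes every agent update
in each window of `B` steps, so `Φ²` contracts once per window; after `T / B - 1` windows the
contraction factor is at most `B / T` for the chosen step size, and the accumulated noise is
`O(B² log(T / B) / T)`. When the step size is too large for this, the diameter bound `D²` is
already of the required order.
-/

open scoped RealInnerProductSpace
open Finset Real

def LipschitzCrossEffects {ι E F : Type*} [DecidableEq ι] [SeminormedAddCommGroup E]
    [SeminormedAddCommGroup F] (𝒳 : ι → Set E) (G : ι → (ι → E) → F) (L : ι → ι → ℝ) : Prop :=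
  ∀ i j (x : ι → E), (∀ k, x k ∈ 𝒳 k) →
    ∀ yj ∈ 𝒳 j, ‖G i x - G i (Function.update x j yj)‖ ≤ L i j * ‖x j - yj‖

def StronglyMonotoneInOwn {ι E : Type*} [DecidableEq ι] [NormedAddCommGroup E]
    [InnerProductSpace ℝ E] (𝒳 : ι → Set E) (G : ι → (ι → E) → E) (μ : ι → ℝ) : Prop :=
  ∀ i (x : ι → E), (∀ j, x j ∈ 𝒳 j) →
    ∀ yi ∈ 𝒳 i, μ i * ‖x i - yi‖ ^ 2 ≤ ⟪G i x - G i (Function.update x i yi), x i - yi⟫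

def IsNearestPointMap {ι E : Type*} [SeminormedAddCommGroup E] (𝒳 : ι → Set E)
    (P : ι → E → E) : Prop :=
  ∀ i y, P i y ∈ 𝒳 i ∧ ∀ z ∈ 𝒳 i, ‖y - P i y‖ ≤ ‖y - z‖

section Projection

variable {E : Type*} [NormedAddCommGroup E] [InnerProductSpace ℝ E]

theorem real_inner_sub_le_zero_of_forall_norm_sub_le {K : Set E} (hK : Convex ℝ K) {u p : E}
    (hp : p ∈ K) (hmin : ∀ z ∈ K, ‖u - p‖ ≤ ‖u - z‖) : ∀ z ∈ K, ⟪u - p, z - p⟫ ≤ 0 := by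
  have : Nonempty K := ⟨⟨p, hp⟩⟩
  rw [← norm_eq_iInf_iff_real_inner_le_zero hK hp]
  exact le_antisymm (le_ciInf fun z => hmin z z.2)
    (ciInf_le (f := fun z : K => ‖u - z‖) ⟨0, by rintro _ ⟨z, rfl⟩; exact norm_nonneg _⟩
      ⟨p, hp⟩)

theorem norm_sub_le_of_real_inner_le_zero {p q u v : E} (hp : ⟪u - p, q - p⟫ ≤ 0)
    (hq : ⟪v - q, p - q⟫ ≤ 0) : ‖p - q‖ ≤ ‖u - v‖ := by
  have key : ‖p - q‖ ^ 2 ≤ ⟪u - v, p - q⟫ := by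
    rw [← neg_sub p q, inner_neg_right] at hp
    rw [show u - v = (u - p) + (p - q) - (v - q) by abel, inner_sub_left, inner_add_left,
      real_inner_self_eq_norm_sq]
    linarith
  have hcs := real_inner_le_norm (u - v) (p - q)
  by_contra! h
  nlinarith [norm_nonneg (u - v)]

/-- The solution `xs` of the variational inequality is fixed by the projected step
`xs - η • gs`, so nonexpansiveness of the projection compares the two steps. -/
theorem norm_proj_step_sub_le {K : Set E} (hK : Convex ℝ K) {x g xs gs p : E} {η : ℝ}
    (hη : 0 ≤ η) (hp : p ∈ K) (hmin : ∀ z ∈ K, ‖x - η • g - p‖ ≤ ‖x - η • g - z‖)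
    (hxs : xs ∈ K) (hvi : ∀ z ∈ K, 0 ≤ ⟪gs, z - xs⟫) :
    ‖p - xs‖ ≤ ‖x - xs - η • (g - gs)‖ := by
  have hfix : ⟪xs - η • gs - xs, p - xs⟫ ≤ 0 := by
    rw [sub_sub_cancel_left, inner_neg_left, real_inner_smul_left, neg_nonpos]
    exact mul_nonneg hη (hvi p hp)
  convert norm_sub_le_of_real_inner_le_zero
    (real_inner_sub_le_zero_of_forall_norm_sub_le hK hp hmin xs hxs) hfix using 2
  rw [smul_sub]
  abel

end Projection

section CrossEffects

variable {ι E F : Type*} [Fintype ι] [DecidableEq ι] [SeminormedAddCommGroup E]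
  [SeminormedAddCommGroup F]

theorem LipschitzCrossEffects.norm_sub_le_sum {𝒳 : ι → Set E} {G : ι → (ι → E) → F}
    {L : ι → ι → ℝ} (hlip : LipschitzCrossEffects 𝒳 G L) {x y : ι → E}
    (hx : ∀ k, x k ∈ 𝒳 k) (hy : ∀ k, y k ∈ 𝒳 k) (i : ι) :
    ‖G i x - G i y‖ ≤ ∑ j, L i j * ‖x j - y j‖ := by
  suffices h : ∀ s : Finset ι,
      ‖G i x - G i (s.piecewise y x)‖ ≤ ∑ j ∈ s, L i j * ‖x j - y j‖ by
    simpa using h univ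
  intro s
  induction s using Finset.induction_on with
  | empty => simp
  | insert j s hj ih =>
    set z := s.piecewise y x
    have hz : ∀ k, z k ∈ 𝒳 k := fun k => s.piecewise_cases y x (· ∈ 𝒳 k) (hy k) (hx k)
    have hstep : ‖G i z - G i (Function.update z j (y j))‖ ≤ L i j * ‖x j - y j‖ := by
      simpa [z, hj] using hlip i j z hz (y j) (hy j)
    rw [piecewise_insert, sum_insert hj, add_comm]
    exact (norm_sub_le_norm_sub_add_norm_sub _ _ _).trans (add_le_add ih hstep)

end CrossEffects

section Game

variable {ι E : Type*} [Fintype ι] [DecidableEq ι] [NormedAddCommGroup E] [InnerProductSpace ℝ E]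
  {𝒳 : ι → Set E} {G : ι → (ι → E) → E} {μ : ι → ℝ} {L : ι → ι → ℝ} {U : ℝ} {xs : ι → E}
  {P : ι → E → E}

theorem le_inner_sub_of_stronglyMonotoneInOwn (hmono : StronglyMonotoneInOwn 𝒳 G μ)
    (hlip : LipschitzCrossEffects 𝒳 G L) {x : ι → E} (hx : ∀ k, x k ∈ 𝒳 k)
    (hxs : ∀ k, xs k ∈ 𝒳 k) (i : ι) :
    μ i * ‖x i - xs i‖ ^ 2 - (∑ j ∈ univ.erase i, L i j * ‖x j - xs j‖) * ‖x i - xs i‖ ≤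
      ⟪G i x - G i xs, x i - xs i⟫ := by
  set x' := Function.update x i (xs i)
  have hx' : ∀ k, x' k ∈ 𝒳 k := by
    intro k
    rcases eq_or_ne k i with rfl | hk
    · simpa [x'] using hxs k
    · simpa [x', hk] using hx k
  have hcross : ‖G i x' - G i xs‖ ≤ ∑ j ∈ univ.erase i, L i j * ‖x j - xs j‖ := by
    refine (hlip.norm_sub_le_sum hx' hxs i).trans_eq ?_
    rw [← sum_erase univ (a := i) (by simp [x'])]
    exact sum_congr rfl fun j hj => by simp [x', ne_of_mem_erase hj]
  have hsplit : ⟪G i x - G i xs, x i - xs i⟫ =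
      ⟪G i x - G i x', x i - xs i⟫ + ⟪G i x' - G i xs, x i - xs i⟫ := by
    rw [← inner_add_left, sub_add_sub_cancel]
  have hcs := neg_le_of_abs_le (abs_real_inner_le_norm (G i x' - G i xs) (x i - xs i))
  have := mul_le_mul_of_nonneg_right hcross (norm_nonneg (x i - xs i))
  linarith [hmono i x hx (xs i) (hxs i)]

theorem sq_norm_proj_step_sub_le (hconvex : ∀ i, Convex ℝ (𝒳 i))
    (hmono : StronglyMonotoneInOwn 𝒳 G μ) (hlip : LipschitzCrossEffects 𝒳 G L)
    (hU : ∀ i (x : ι → E), (∀ j, x j ∈ 𝒳 j) → ‖G i x‖ ≤ U) (hxs : ∀ i, xs i ∈ 𝒳 i)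
    (hnash : ∀ i, ∀ z ∈ 𝒳 i, 0 ≤ ⟪G i xs, z - xs i⟫) (hP : IsNearestPointMap 𝒳 P)
    {η : ℝ} (hη : 0 ≤ η) {x : ι → E} (hx : ∀ k, x k ∈ 𝒳 k) (i : ι) :
    ‖P i (x i - η • G i x) - xs i‖ ^ 2 ≤
      (1 - 2 * η * μ i) * ‖x i - xs i‖ ^ 2 +
        2 * η * (∑ j ∈ univ.erase i, L i j * ‖x j - xs j‖) * ‖x i - xs i‖ + (2 * η * U) ^ 2 := by
  set a := x i - xs i
  set c := G i x - G i xs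
  have hproj : ‖P i (x i - η • G i x) - xs i‖ ≤ ‖a - η • c‖ :=
    norm_proj_step_sub_le (hconvex i) hη (hP i _).1 (hP i _).2 (hxs i) (hnash i)
  have hexpand : ‖a - η • c‖ ^ 2 = ‖a‖ ^ 2 - 2 * η * ⟪c, a⟫ + η ^ 2 * ‖c‖ ^ 2 := by
    rw [norm_sub_sq_real, real_inner_smul_right, norm_smul, Real.norm_of_nonneg hη,
      real_inner_comm]
    ring
  have hc : ‖c‖ ≤ 2 * U := (norm_sub_le _ _).trans (by linarith [hU i x hx, hU i xs hxs])
  have hinner := mul_le_mul_of_nonneg_left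
    (le_inner_sub_of_stronglyMonotoneInOwn hmono hlip hx hxs i) (by positivity : 0 ≤ 2 * η)
  have hproj_sq := pow_le_pow_left₀ (norm_nonneg _) hproj 2
  have hc_sq := mul_le_mul_of_nonneg_left (pow_le_pow_left₀ (norm_nonneg c) hc 2) (sq_nonneg η)
  linarith

theorem le_of_sum_mul_le_mul_sub {r : ι → ℝ} (hr : ∀ j, 0 < r j) {ε : ℝ} {i : ι}
    (hL : ∀ j, 0 ≤ L i j) (hgap : ∑ j ∈ univ.erase i, r j * L i j ≤ r i * (μ i - ε)) :
    ε ≤ μ i := by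
  have : 0 ≤ ∑ j ∈ univ.erase i, r j * L i j := sum_nonneg fun j _ => mul_nonneg (hr j).le (hL j)
  exact sub_nonneg.1 (nonneg_of_mul_nonneg_right (this.trans hgap) (hr i))

theorem sq_div_proj_step_sub_le (hconvex : ∀ i, Convex ℝ (𝒳 i))
    (hmono : StronglyMonotoneInOwn 𝒳 G μ) (hlip : LipschitzCrossEffects 𝒳 G L)
    (hU : ∀ i (x : ι → E), (∀ j, x j ∈ 𝒳 j) → ‖G i x‖ ≤ U) (hxs : ∀ i, xs i ∈ 𝒳 i)
    (hnash : ∀ i, ∀ z ∈ 𝒳 i, 0 ≤ ⟪G i xs, z - xs i⟫) (hP : IsNearestPointMap 𝒳 P)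
    {r : ι → ℝ} (hr : ∀ j, 0 < r j) {ε η R : ℝ} {x : ι → E} (hx : ∀ k, x k ∈ 𝒳 k)
    (hR : ∀ j, ‖x j - xs j‖ / r j ≤ R) (i : ι) (hL : ∀ j, 0 ≤ L i j)
    (hgap : ∑ j ∈ univ.erase i, r j * L i j ≤ r i * (μ i - ε)) (hη : 0 ≤ η)
    (hημ : 2 * η * μ i ≤ 1) {K : ℝ} (hK : (r i)⁻¹ ≤ K) :
    (‖P i (x i - η • G i x) - xs i‖ / r i) ^ 2 ≤ (1 - 2 * η * ε) * R ^ 2 + (2 * η * U * K) ^ 2 := by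
  have hri := hr i
  have hR0 : 0 ≤ R := (div_nonneg (norm_nonneg _) hri.le).trans (hR i)
  have hdist : ∀ j, ‖x j - xs j‖ ≤ r j * R := fun j => by
    rw [← div_le_iff₀' (hr j)]; exact hR j
  have hμε : 0 ≤ μ i - ε := sub_nonneg.2 (le_of_sum_mul_le_mul_sub hr hL hgap)
  have hcross : ∑ j ∈ univ.erase i, L i j * ‖x j - xs j‖ ≤ r i * (μ i - ε) * R := by
    calc ∑ j ∈ univ.erase i, L i j * ‖x j - xs j‖
        ≤ ∑ j ∈ univ.erase i, r j * L i j * R :=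
          sum_le_sum fun j _ => by linarith [mul_le_mul_of_nonneg_left (hdist j) (hL j)]
      _ ≤ r i * (μ i - ε) * R := by rw [← sum_mul]; exact mul_le_mul_of_nonneg_right hgap hR0
  have hstep := sq_norm_proj_step_sub_le hconvex hmono hlip hU hxs hnash hP hη hx i
  have h1 := mul_le_mul_of_nonneg_left (pow_le_pow_left₀ (norm_nonneg _) (hdist i) 2)
    (by linarith : 0 ≤ 1 - 2 * η * μ i)
  have h2 := mul_le_mul (mul_le_mul_of_nonneg_left hcross (by positivity : 0 ≤ 2 * η))
    (hdist i) (norm_nonneg _) (by positivity)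
  have hU0 : 0 ≤ U := (norm_nonneg _).trans (hU i xs hxs)
  calc (‖P i (x i - η • G i x) - xs i‖ / r i) ^ 2
      = ‖P i (x i - η • G i x) - xs i‖ ^ 2 / r i ^ 2 := div_pow _ _ _
    _ ≤ ((1 - 2 * η * ε) * (r i * R) ^ 2 + (2 * η * U) ^ 2) / r i ^ 2 := by
        gcongr
        linarith
    _ = (1 - 2 * η * ε) * R ^ 2 + (2 * η * U * (r i)⁻¹) ^ 2 := by field_simp
    _ ≤ (1 - 2 * η * ε) * R ^ 2 + (2 * η * U * K) ^ 2 := by gcongr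

end Game

theorem le_pow_mul_add_of_le_mul_add {a : ℕ → ℝ} {ρ b V : ℝ} (h : ∀ k, a (k + 1) ≤ ρ * a k + b)
    (hρ : 0 ≤ ρ) (hV : 0 ≤ V) (hb : b ≤ (1 - ρ) * V) (k : ℕ) : a k ≤ ρ ^ k * a 0 + V := by
  induction k with
  | zero => simpa using hV
  | succ k ih =>
    calc a (k + 1) ≤ ρ * (ρ ^ k * a 0 + V) + b := (h k).trans (by gcongr)
      _ ≤ ρ ^ (k + 1) * a 0 + V := by rw [pow_succ]; linarith

section Schedule

variable {ι : Type*} [Finite ι] [Nonempty ι] {w : ℕ → ι → ℝ} {𝕋 : ι → Set ℕ} {ρ c : ℝ}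

theorem sq_iSup_succ_le (hw : ∀ t j, 0 ≤ w t j)
    (hupd : ∀ t, 1 ≤ t → ∀ j, t ∈ 𝕋 j → w (t + 1) j ^ 2 ≤ ρ * (⨆ k, w t k) ^ 2 + c)
    (hstay : ∀ t, 1 ≤ t → ∀ j, t ∉ 𝕋 j → w (t + 1) j = w t j) (hρ : ρ ≤ 1) (hc : 0 ≤ c)
    {t : ℕ} (ht : 1 ≤ t) : (⨆ j, w (t + 1) j) ^ 2 ≤ (⨆ j, w t j) ^ 2 + c := by
  obtain ⟨j, hj⟩ := exists_eq_ciSup_of_finite (f := w (t + 1))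
  rw [← hj]
  by_cases htj : t ∈ 𝕋 j
  · linarith [hupd t ht j htj, mul_le_of_le_one_left (sq_nonneg (⨆ k, w t k)) hρ]
  · rw [hstay t ht j htj]
    have := pow_le_pow_left₀ (hw t j) (le_ciSup (Finite.bddAbove_range _) j) 2
    linarith

theorem sq_iSup_add_le (hw : ∀ t j, 0 ≤ w t j)
    (hupd : ∀ t, 1 ≤ t → ∀ j, t ∈ 𝕋 j → w (t + 1) j ^ 2 ≤ ρ * (⨆ k, w t k) ^ 2 + c)
    (hstay : ∀ t, 1 ≤ t → ∀ j, t ∉ 𝕋 j → w (t + 1) j = w t j) (hρ : ρ ≤ 1) (hc : 0 ≤ c)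
    {t : ℕ} (ht : 1 ≤ t) (n : ℕ) : (⨆ j, w (t + n) j) ^ 2 ≤ (⨆ j, w t j) ^ 2 + n * c := by
  induction n with
  | zero => simp
  | succ n ih =>
    have := sq_iSup_succ_le hw hupd hstay hρ hc (t := t + n) (by omega)
    rw [← add_assoc]
    push_cast
    linarith

/-- Every agent updates at least once in the window; its last update there contracts the
potential as it stood after the drift of at most `B` steps, and it stays put afterwards. -/
theorem sq_iSup_add_period_le (hw : ∀ t j, 0 ≤ w t j) {B : ℕ}
    (hsch : ∀ j t, ∃ s ∈ 𝕋 j, t ≤ s ∧ s < t + B)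
    (hupd : ∀ t, 1 ≤ t → ∀ j, t ∈ 𝕋 j → w (t + 1) j ^ 2 ≤ ρ * (⨆ k, w t k) ^ 2 + c)
    (hstay : ∀ t, 1 ≤ t → ∀ j, t ∉ 𝕋 j → w (t + 1) j = w t j) (hρ0 : 0 ≤ ρ) (hρ1 : ρ ≤ 1)
    (hc : 0 ≤ c) {t : ℕ} (ht : 1 ≤ t) :
    (⨆ j, w (t + B) j) ^ 2 ≤ ρ * (⨆ j, w t j) ^ 2 + 2 * B * c := by
  have hB : (1 : ℝ) ≤ B := by
    obtain ⟨s, -, hts, hsB⟩ := hsch (Classical.arbitrary ι) t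
    exact_mod_cast (by omega : 1 ≤ B)
  have hbound : ∀ j, w (t + B) j ^ 2 ≤ ρ * (⨆ k, w t k) ^ 2 + 2 * B * c := by
    intro j
    obtain ⟨s, hs, hts, hsB⟩ := hsch j t
    have hafter : ∀ u, t ≤ u → u < t + B → u ∈ 𝕋 j →
        w (u + 1) j ^ 2 ≤ ρ * (⨆ k, w t k) ^ 2 + 2 * B * c := by
      intro u htu huB hu
      have hdrift := sq_iSup_add_le hw hupd hstay hρ1 hc ht (u - t)
      rw [Nat.add_sub_cancel' htu] at hdrift
      have hBc : (u - t : ℕ) * c ≤ B * c := by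
        gcongr; exact_mod_cast (by omega : u - t ≤ B)
      have hρBc : ρ * (B * c) ≤ B * c := mul_le_of_le_one_left (by positivity) hρ1
      have hcB : c ≤ B * c := le_mul_of_one_le_left hc hB
      linarith [hupd u (by omega) j hu, mul_le_mul_of_nonneg_left hdrift hρ0,
        mul_le_mul_of_nonneg_left hBc hρ0]
    have hlast : ∀ u, s + 1 ≤ u → u ≤ t + B →
        w u j ^ 2 ≤ ρ * (⨆ k, w t k) ^ 2 + 2 * B * c := by
      intro u hu
      induction u, hu using Nat.le_induction with
      | base => exact fun _ => hafter s hts hsB hs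
      | succ u hu ih =>
        intro huB
        by_cases huj : u ∈ 𝕋 j
        · exact hafter u (by omega) (by omega) huj
        · rw [hstay u (by omega) j huj]; exact ih (by omega)
    exact hlast (t + B) (by omega) le_rfl
  obtain ⟨j, hj⟩ := exists_eq_ciSup_of_finite (f := w (t + B))
  rw [← hj]
  exact hbound j

theorem sq_iSup_le_pow_mul_add (hw : ∀ t j, 0 ≤ w t j) {B : ℕ}
    (hsch : ∀ j t, ∃ s ∈ 𝕋 j, t ≤ s ∧ s < t + B)
    (hupd : ∀ t, 1 ≤ t → ∀ j, t ∈ 𝕋 j → w (t + 1) j ^ 2 ≤ ρ * (⨆ k, w t k) ^ 2 + c)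
    (hstay : ∀ t, 1 ≤ t → ∀ j, t ∉ 𝕋 j → w (t + 1) j = w t j) (hρ0 : 0 ≤ ρ) (hρ1 : ρ ≤ 1)
    (hc : 0 ≤ c) {V : ℝ} (hV : 0 ≤ V) (hBV : 2 * B * c ≤ (1 - ρ) * V) (k n : ℕ) (hn : n ≤ B) :
    (⨆ j, w (1 + k * B + n) j) ^ 2 ≤ ρ ^ k * (⨆ j, w 1 j) ^ 2 + V + B * c := by
  have hblocks := le_pow_mul_add_of_le_mul_add (a := fun k => (⨆ j, w (1 + k * B) j) ^ 2)
    (fun k => by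
      simpa [add_mul, add_assoc] using
        sq_iSup_add_period_le hw hsch hupd hstay hρ0 hρ1 hc (t := 1 + k * B) (by omega))
    hρ0 hV hBV k
  have hdrift := sq_iSup_add_le hw hupd hstay hρ1 hc (t := 1 + k * B) (by omega) n
  have : (n : ℝ) * c ≤ B * c := by gcongr
  simp only [zero_mul, add_zero] at hblocks
  linarith

end Schedule

theorem one_sub_two_mul_log_div_pow_le {m : ℕ} (hm : 2 ≤ m)
    (hs : 0 ≤ 1 - 2 * (log m / m)) : (1 - 2 * (log m / m)) ^ (m - 1) ≤ 1 / m := by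
  have hm0 : (0 : ℝ) < m := by positivity
  have hlog : 0 ≤ log m := log_nonneg (by exact_mod_cast (by omega : 1 ≤ m))
  have hexp : (m - 1 : ℕ) * -(2 * (log m / m)) ≤ -log m := by
    rw [Nat.cast_sub (by omega), Nat.cast_one]
    have : (2 : ℝ) ≤ m := by exact_mod_cast hm
    rw [mul_neg, neg_le_neg_iff, ← mul_assoc, mul_div_assoc', le_div_iff₀ hm0]
    nlinarith
  calc (1 - 2 * (log m / m)) ^ (m - 1) ≤ exp (-(2 * (log m / m))) ^ (m - 1) :=
        pow_le_pow_left₀ hs (one_sub_le_exp_neg _) _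
    _ ≤ exp (-log m) := by rw [← exp_nat_mul]; exact exp_le_exp.2 hexp
    _ = 1 / m := by rw [exp_neg, exp_log hm0, one_div]

theorem pow_mul_add_le_log_div {m B : ℕ} (hm : 2 ≤ m) (hB : 1 ≤ B) {a b : ℝ} (ha : 0 ≤ a)
    (hs : 0 ≤ 1 - 2 * (log m / m)) :
    (1 - 2 * (log m / m)) ^ (m - 1) * a + 2 * (B * b * (log m / m)) ≤
      (a / log 2 + 2 * b) * B * (log m / m) := by
  have hm0 : (0 : ℝ) < m := by positivity
  have hlog2 : log 2 ≤ log m := log_le_log (by norm_num) (by exact_mod_cast hm)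
  have hB1 : (1 : ℝ) ≤ B := by exact_mod_cast hB
  have hpow : (1 - 2 * (log m / m)) ^ (m - 1) ≤ B * (log m / m) / log 2 := by
    refine (one_sub_two_mul_log_div_pow_le hm hs).trans ?_
    rw [le_div_iff₀ (by positivity), one_div, inv_mul_eq_div, ← mul_div_assoc]
    gcongr
    nlinarith [log_pos (by norm_num : (1 : ℝ) < 2)]
  calc (1 - 2 * (log m / m)) ^ (m - 1) * a + 2 * (B * b * (log m / m))
      ≤ B * (log m / m) / log 2 * a + 2 * (B * b * (log m / m)) := by gcongr
    _ = (a / log 2 + 2 * b) * B * (log m / m) := by ring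

section Play

variable {ι E : Type*} [NormedAddCommGroup E] [InnerProductSpace ℝ E] {𝒳 : ι → Set E}
  {G : ι → (ι → E) → E} {P : ι → E → E} {η : ℝ} {𝕋 : ι → Set ℕ} {x : ℕ → ι → E}

theorem async_iterate_mem (hP : IsNearestPointMap 𝒳 P) (hx1 : ∀ i, x 1 i ∈ 𝒳 i)
    (hupd : ∀ t, 1 ≤ t → ∀ i, t ∈ 𝕋 i → x (t + 1) i = P i (x t i - η • G i (x t)))
    (hnoupd : ∀ t, 1 ≤ t → ∀ i, t ∉ 𝕋 i → x (t + 1) i = x t i) {t : ℕ} (ht : 1 ≤ t) (i : ι) :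
    x t i ∈ 𝒳 i := by
  induction t, ht using Nat.le_induction generalizing i with
  | base => exact hx1 i
  | succ t ht ih =>
    by_cases hti : t ∈ 𝕋 i
    · rw [hupd t ht i hti]; exact (hP i _).1
    · rw [hnoupd t ht i hti]; exact ih i

variable {μ : ι → ℝ} {D ε : ℝ} {xs : ι → E}

theorem sq_norm_async_iterate_sub_le_of_lt (hP : IsNearestPointMap 𝒳 P)
    (hD : ∀ i, ∀ z ∈ 𝒳 i, ∀ w ∈ 𝒳 i, ‖z - w‖ ≤ D) (hxs : ∀ i, xs i ∈ 𝒳 i) (hη : 0 ≤ η)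
    {M : ℝ} (hM : ∀ j, μ j ≤ M) (hε : 0 < ε) {j : ι} (hj : 1 < 2 * η * μ j)
    (hx1 : ∀ i, x 1 i ∈ 𝒳 i)
    (hupd : ∀ t, 1 ≤ t → ∀ i, t ∈ 𝕋 i → x (t + 1) i = P i (x t i - η • G i (x t)))
    (hnoupd : ∀ t, 1 ≤ t → ∀ i, t ∉ 𝕋 i → x (t + 1) i = x t i) {t : ℕ} (ht : 1 ≤ t) (i : ι) :
    ‖x t i - xs i‖ ^ 2 ≤ 2 * M * D ^ 2 / ε * (η * ε) := by
  have hxt := hD i _ (async_iterate_mem hP hx1 hupd hnoupd ht i) _ (hxs i)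
  calc ‖x t i - xs i‖ ^ 2 ≤ D ^ 2 := pow_le_pow_left₀ (norm_nonneg _) hxt 2
    _ ≤ D ^ 2 * (2 * η * M) :=
        le_mul_of_one_le_right (sq_nonneg D) (hj.le.trans (by gcongr; exact hM j))
    _ = 2 * M * D ^ 2 / ε * (η * ε) := by field_simp

variable [Fintype ι] [DecidableEq ι] [Nonempty ι] {L : ι → ι → ℝ} {U : ℝ} {r : ι → ℝ} {K : ℝ}
  {B : ℕ}

theorem sq_iSup_div_async_iterate_sub_le (hconvex : ∀ i, Convex ℝ (𝒳 i))
    (hmono : StronglyMonotoneInOwn 𝒳 G μ) (hlip : LipschitzCrossEffects 𝒳 G L)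
    (hL : ∀ i j, 0 ≤ L i j) (hU : ∀ i (x : ι → E), (∀ j, x j ∈ 𝒳 j) → ‖G i x‖ ≤ U)
    (hxs : ∀ i, xs i ∈ 𝒳 i) (hnash : ∀ i, ∀ z ∈ 𝒳 i, 0 ≤ ⟪G i xs, z - xs i⟫)
    (hP : IsNearestPointMap 𝒳 P) (hD : ∀ i, ∀ z ∈ 𝒳 i, ∀ w ∈ 𝒳 i, ‖z - w‖ ≤ D)
    (hr : ∀ j, 0 < r j) (hK : ∀ j, (r j)⁻¹ ≤ K) (hε : 0 < ε)
    (hgap : ∀ i, ∑ j ∈ univ.erase i, r j * L i j ≤ r i * (μ i - ε))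
    (hsch : ∀ i t, ∃ s ∈ 𝕋 i, t ≤ s ∧ s < t + B) (hη : 0 ≤ η) (hημ : ∀ i, 2 * η * μ i ≤ 1)
    (hx1 : ∀ i, x 1 i ∈ 𝒳 i)
    (hupd : ∀ t, 1 ≤ t → ∀ i, t ∈ 𝕋 i → x (t + 1) i = P i (x t i - η • G i (x t)))
    (hnoupd : ∀ t, 1 ≤ t → ∀ i, t ∉ 𝕋 i → x (t + 1) i = x t i) (k n : ℕ) (hn : n ≤ B) :
    (⨆ j, ‖x (1 + k * B + n) j - xs j‖ / r j) ^ 2 ≤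
      (1 - 2 * η * ε) ^ k * (D * K) ^ 2 + 2 * (B * (2 * U * K / ε) ^ 2 * (η * ε)) := by
  set w : ℕ → ι → ℝ := fun t j => ‖x t j - xs j‖ / r j with hw
  have hw0 : ∀ t j, 0 ≤ w t j := fun t j => div_nonneg (norm_nonneg _) (hr j).le
  obtain ⟨i⟩ := ‹Nonempty ι›
  have hηε : 2 * η * ε ≤ 1 :=
    le_trans (by gcongr; exact le_of_sum_mul_le_mul_sub hr (hL i) (hgap i)) (hημ i)
  have hstep : ∀ t, 1 ≤ t → ∀ j, t ∈ 𝕋 j →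
      w (t + 1) j ^ 2 ≤ (1 - 2 * η * ε) * (⨆ k, w t k) ^ 2 + (2 * η * U * K) ^ 2 := by
    intro t ht j htj
    simp only [hw, hupd t ht j htj]
    exact sq_div_proj_step_sub_le hconvex hmono hlip hU hxs hnash hP hr
      (async_iterate_mem hP hx1 hupd hnoupd ht) (fun k => le_ciSup (Finite.bddAbove_range (w t)) k)
      j (hL j) (hgap j) hη (hημ j) (hK j)
  have hstay : ∀ t, 1 ≤ t → ∀ j, t ∉ 𝕋 j → w (t + 1) j = w t j := fun t ht j htj => by
    simp only [hw, hnoupd t ht j htj]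
  have hinit : (⨆ j, w 1 j) ^ 2 ≤ (D * K) ^ 2 := by
    refine pow_le_pow_left₀ ((hw0 1 i).trans (le_ciSup (Finite.bddAbove_range _) i))
      (ciSup_le fun j => ?_) 2
    simp only [hw, div_eq_mul_inv]
    exact mul_le_mul (hD j _ (hx1 j) _ (hxs j)) (hK j) (inv_nonneg.2 (hr j).le)
      ((norm_nonneg _).trans (hD j _ (hxs j) _ (hxs j)))
  have hnoise : B * (2 * η * U * K) ^ 2 ≤ B * (2 * U * K / ε) ^ 2 * (η * ε) := by
    calc B * (2 * η * U * K) ^ 2 = B * (2 * U * K / ε) ^ 2 * (η * ε) * (η * ε) := by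
          field_simp
      _ ≤ B * (2 * U * K / ε) ^ 2 * (η * ε) :=
          mul_le_of_le_one_right (by positivity) (by linarith)
  have hbound := sq_iSup_le_pow_mul_add (w := w) (V := B * (2 * U * K / ε) ^ 2 * (η * ε)) hw0
    hsch hstep hstay (by linarith) (by nlinarith) (sq_nonneg _) (by positivity)
    (le_of_eq (by field_simp; ring)) k n hn
  linarith [mul_le_mul_of_nonneg_left hinit (pow_nonneg (by linarith : 0 ≤ 1 - 2 * η * ε) k)]

theorem sq_norm_async_iterate_sub_le_of_forall_le (hconvex : ∀ i, Convex ℝ (𝒳 i))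
    (hmono : StronglyMonotoneInOwn 𝒳 G μ) (hlip : LipschitzCrossEffects 𝒳 G L)
    (hL : ∀ i j, 0 ≤ L i j) (hU : ∀ i (x : ι → E), (∀ j, x j ∈ 𝒳 j) → ‖G i x‖ ≤ U)
    (hxs : ∀ i, xs i ∈ 𝒳 i) (hnash : ∀ i, ∀ z ∈ 𝒳 i, 0 ≤ ⟪G i xs, z - xs i⟫)
    (hP : IsNearestPointMap 𝒳 P) (hD : ∀ i, ∀ z ∈ 𝒳 i, ∀ w ∈ 𝒳 i, ‖z - w‖ ≤ D)
    (hr : ∀ j, 0 < r j) (hK : ∀ j, (r j)⁻¹ ≤ K) {R : ℝ} (hR : ∀ j, r j ≤ R) (hε : 0 < ε)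
    (hgap : ∀ i, ∑ j ∈ univ.erase i, r j * L i j ≤ r i * (μ i - ε))
    (hB : 1 ≤ B) (hsch : ∀ i t, ∃ s ∈ 𝕋 i, t ≤ s ∧ s < t + B) {m : ℕ} (hm : 2 ≤ m)
    (hη : 0 ≤ η) (hηε : η * ε = log m / m) (hημ : ∀ i, 2 * η * μ i ≤ 1)
    (hx1 : ∀ i, x 1 i ∈ 𝒳 i)
    (hupd : ∀ t, 1 ≤ t → ∀ i, t ∈ 𝕋 i → x (t + 1) i = P i (x t i - η • G i (x t)))
    (hnoupd : ∀ t, 1 ≤ t → ∀ i, t ∉ 𝕋 i → x (t + 1) i = x t i) (i : ι) :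
    ‖x (B * m) i - xs i‖ ^ 2 ≤
      R ^ 2 * ((D * K) ^ 2 / log 2 + 2 * (2 * U * K / ε) ^ 2) * B * (log m / m) := by
  have hΦ := sq_iSup_div_async_iterate_sub_le hconvex hmono hlip hL hU hxs hnash hP hD hr hK hε
    hgap hsch hη hημ hx1 hupd hnoupd (m - 1) (B - 1) (Nat.sub_le B 1)
  have hT : 1 + (m - 1) * B + (B - 1) = B * m := by
    have := Nat.mul_le_mul_right B hm
    rw [Nat.sub_one_mul, Nat.mul_comm B m]
    omega
  rw [hT, mul_assoc 2 η, hηε] at hΦ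
  have hρ : 0 ≤ 1 - 2 * (log m / m) := by
    have := le_of_sum_mul_le_mul_sub hr (hL i) (hgap i)
    rw [← hηε, ← mul_assoc]
    nlinarith [hημ i]
  have hdist : ‖x (B * m) i - xs i‖ ≤ R * ⨆ j, ‖x (B * m) j - xs j‖ / r j :=
    calc ‖x (B * m) i - xs i‖ = r i * (‖x (B * m) i - xs i‖ / r i) :=
          (mul_div_cancel₀ _ (hr i).ne').symm
      _ ≤ R * ⨆ j, ‖x (B * m) j - xs j‖ / r j :=
          mul_le_mul (hR i) (le_ciSup (f := fun j => ‖x (B * m) j - xs j‖ / r j)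
            (Finite.bddAbove_range _) i) (div_nonneg (norm_nonneg _) (hr i).le)
            ((hr i).le.trans (hR i))
  calc ‖x (B * m) i - xs i‖ ^ 2 ≤ R ^ 2 * (⨆ j, ‖x (B * m) j - xs j‖ / r j) ^ 2 := by
        rw [← mul_pow]; exact pow_le_pow_left₀ (norm_nonneg _) hdist 2
    _ ≤ R ^ 2 * ((D * K) ^ 2 / log 2 + 2 * (2 * U * K / ε) ^ 2) * B * (log m / m) := by
        rw [mul_assoc, mul_assoc]
        gcongr
        exact hΦ.trans ((pow_mul_add_le_log_div hm hB (sq_nonneg _) hρ).trans_eq (by ring))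

theorem sq_norm_async_iterate_sub_le (hconvex : ∀ i, Convex ℝ (𝒳 i))
    (hmono : StronglyMonotoneInOwn 𝒳 G μ) (hlip : LipschitzCrossEffects 𝒳 G L)
    (hL : ∀ i j, 0 ≤ L i j) (hU : ∀ i (x : ι → E), (∀ j, x j ∈ 𝒳 j) → ‖G i x‖ ≤ U)
    (hxs : ∀ i, xs i ∈ 𝒳 i) (hnash : ∀ i, ∀ z ∈ 𝒳 i, 0 ≤ ⟪G i xs, z - xs i⟫)
    (hP : IsNearestPointMap 𝒳 P) (hD : ∀ i, ∀ z ∈ 𝒳 i, ∀ w ∈ 𝒳 i, ‖z - w‖ ≤ D)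
    (hr : ∀ j, 0 < r j) (hK : ∀ j, (r j)⁻¹ ≤ K) {R : ℝ} (hR : ∀ j, r j ≤ R) {M : ℝ}
    (hM : ∀ j, μ j ≤ M) (hε : 0 < ε)
    (hgap : ∀ i, ∑ j ∈ univ.erase i, r j * L i j ≤ r i * (μ i - ε))
    (hB : 1 ≤ B) (hsch : ∀ i t, ∃ s ∈ 𝕋 i, t ≤ s ∧ s < t + B) {m : ℕ} (hm : 2 ≤ m)
    (hηε : η * ε = log m / m) (hx1 : ∀ i, x 1 i ∈ 𝒳 i)
    (hupd : ∀ t, 1 ≤ t → ∀ i, t ∈ 𝕋 i → x (t + 1) i = P i (x t i - η • G i (x t)))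
    (hnoupd : ∀ t, 1 ≤ t → ∀ i, t ∉ 𝕋 i → x (t + 1) i = x t i) (i : ι) :
    ‖x (B * m) i - xs i‖ ^ 2 ≤ (R ^ 2 * ((D * K) ^ 2 / log 2 + 2 * (2 * U * K / ε) ^ 2) +
      2 * M * D ^ 2 / ε) * (B * (log m / m)) := by
  have hs : 0 ≤ log m / m := div_nonneg (log_natCast_nonneg m) m.cast_nonneg
  have hη : 0 ≤ η := nonneg_of_mul_nonneg_left (hηε ▸ hs) hε
  have hBs : 0 ≤ B * (log m / m) := by positivity
  have hM0 : 0 ≤ M := hε.le.trans ((le_of_sum_mul_le_mul_sub hr (hL i) (hgap i)).trans (hM i))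
  by_cases hsmall : ∀ j, 2 * η * μ j ≤ 1
  · have := sq_norm_async_iterate_sub_le_of_forall_le hconvex hmono hlip hL hU hxs hnash hP hD
      hr hK hR hε hgap hB hsch hm hη hηε hsmall hx1 hupd hnoupd i
    linarith [mul_nonneg (by positivity : 0 ≤ 2 * M * D ^ 2 / ε) hBs]
  · obtain ⟨j, hj⟩ : ∃ j, 1 < 2 * η * μ j := by simpa using hsmall
    have := sq_norm_async_iterate_sub_le_of_lt hP hD hxs hη hM hε hj hx1 hupd hnoupd
      (t := B * m) (by nlinarith) i
    rw [hηε] at this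
    have hB1 : (1 : ℝ) ≤ B := by exact_mod_cast hB
    have hC₁ : 0 ≤ R ^ 2 * ((D * K) ^ 2 / log 2 + 2 * (2 * U * K / ε) ^ 2) := by positivity
    calc ‖x (B * m) i - xs i‖ ^ 2 ≤ 2 * M * D ^ 2 / ε * (log m / m) := this
      _ ≤ 2 * M * D ^ 2 / ε * (B * (log m / m)) := by gcongr; exact le_mul_of_one_le_left hs hB1
      _ ≤ _ := by linarith [mul_nonneg hC₁ hBs]

end Play

theorem le_mul_sub_of_le_sub_one_div_mul {a b c ε : ℝ} (ha : 0 < a) (h : ε ≤ b - 1 / a * c) :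
    c ≤ a * (b - ε) := by
  rw [one_div, ← div_eq_inv_mul, le_sub_comm, div_le_iff₀ ha] at h
  linarith

theorem firstOrder_asynchronous_last_iterate_convergence_general {N d : ℕ} [NeZero N]
    (𝒳 : Fin N → Set (EuclideanSpace ℝ (Fin d)))
    (hconvex : ∀ i, Convex ℝ (𝒳 i))
    (D : ℝ) (hD : ∀ i, ∀ z ∈ 𝒳 i, ∀ w ∈ 𝒳 i, ‖z - w‖ ≤ D)
    (G : Fin N → (Fin N → EuclideanSpace ℝ (Fin d)) → EuclideanSpace ℝ (Fin d))
    (μ : Fin N → ℝ) (hμ : ∀ i, 0 < μ i)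
    (hmono : ∀ i (x : Fin N → EuclideanSpace ℝ (Fin d)), (∀ j, x j ∈ 𝒳 j) →
      ∀ yi ∈ 𝒳 i, μ i * ‖x i - yi‖ ^ 2 ≤ ⟪G i x - G i (Function.update x i yi), x i - yi⟫)
    (L : Fin N → Fin N → ℝ) (hL : ∀ i j, 0 ≤ L i j)
    (hlip : ∀ i j (x : Fin N → EuclideanSpace ℝ (Fin d)), (∀ k, x k ∈ 𝒳 k) →
      ∀ yj ∈ 𝒳 j, ‖G i x - G i (Function.update x j yj)‖ ≤ L i j * ‖x j - yj‖)
    (U : ℝ)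
    (hU : ∀ i (x : Fin N → EuclideanSpace ℝ (Fin d)), (∀ j, x j ∈ 𝒳 j) → ‖G i x‖ ≤ U)
    (xstar : Fin N → EuclideanSpace ℝ (Fin d)) (hxstar : ∀ i, xstar i ∈ 𝒳 i)
    (hnash : ∀ i, ∀ z ∈ 𝒳 i, 0 ≤ ⟪G i xstar, z - xstar i⟫)
    (r : Fin N → ℝ) (hr : ∀ i, 0 < r i)
    (ε : ℝ)
    (hεdef : ε = Finset.univ.inf' Finset.univ_nonempty
      (fun i => μ i - (1 / r i) * ∑ j ∈ Finset.univ.erase i, r j * L i j))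
    (hεpos : 0 < ε)
    (P : Fin N → EuclideanSpace ℝ (Fin d) → EuclideanSpace ℝ (Fin d))
    (hPmem : ∀ i y, P i y ∈ 𝒳 i)
    (hPproj : ∀ i y, ∀ z ∈ 𝒳 i, ‖y - P i y‖ ≤ ‖y - z‖) :
    ∃ C > (0 : ℝ), ∀ (B : ℕ), 1 ≤ B →
      ∀ 𝕋 : Fin N → Set ℕ,
        (∀ i t, ∃ s ∈ 𝕋 i, t ≤ s ∧ s < t + B) →
      ∀ T : ℕ, B ∣ T → 2 * B ≤ T →
      ∀ η : ℝ, η = (B : ℝ) * Real.log ((T : ℝ) / (B : ℝ)) / (ε * (T : ℝ)) →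
      ∀ x : ℕ → Fin N → EuclideanSpace ℝ (Fin d),
        (∀ i, x 1 i ∈ 𝒳 i) →
        (∀ t, 1 ≤ t → ∀ i, t ∈ 𝕋 i →
          x (t + 1) i = P i (x t i - η • G i (x t))) →
        (∀ t, 1 ≤ t → ∀ i, t ∉ 𝕋 i → x (t + 1) i = x t i) →
      ∀ i, ‖x T i - xstar i‖ ^ 2 ≤
        C * (B : ℝ) ^ 3 * Real.log ((T : ℝ) / (B : ℝ)) / (T : ℝ) := by
  have hgap i : ∑ j ∈ univ.erase i, r j * L i j ≤ r i * (μ i - ε) :=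
    le_mul_sub_of_le_sub_one_div_mul (hr i) (hεdef ▸ inf'_le _ (mem_univ i))
  have hP : IsNearestPointMap 𝒳 P := fun i y => ⟨hPmem i y, hPproj i y⟩
  have hK j : (r j)⁻¹ ≤ ∑ k, (r k)⁻¹ :=
    single_le_sum (fun k _ => inv_nonneg.2 (hr k).le) (mem_univ j)
  have hR j : r j ≤ ∑ k, r k := single_le_sum (fun k _ => (hr k).le) (mem_univ j)
  have hM j : μ j ≤ ∑ k, μ k := single_le_sum (fun k _ => (hμ k).le) (mem_univ j)
  set C := (∑ k, r k) ^ 2 * ((D * ∑ k, (r k)⁻¹) ^ 2 / log 2 + 2 * (2 * U * (∑ k, (r k)⁻¹) / ε) ^ 2)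
    + 2 * (∑ k, μ k) * D ^ 2 / ε
  have hC : 0 ≤ C := by have := sum_nonneg fun k (_ : k ∈ univ) => (hμ k).le; positivity
  refine ⟨C + 1, by positivity, fun B hB 𝕋 hsch T hBT h2B η hη x hx1 hupd hnoupd i => ?_⟩
  obtain ⟨m, rfl⟩ := hBT
  have hm : 2 ≤ m := Nat.le_of_mul_le_mul_left (by linarith) hB
  have hlog : log ((B * m : ℕ) / B : ℝ) = log m := by
    push_cast; rw [mul_div_cancel_left₀ _ (by positivity)]
  have hηε : η * ε = log m / m := by rw [hη, hlog]; push_cast; field_simp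
  have hB1 : (1 : ℝ) ≤ B := by exact_mod_cast hB
  calc ‖x (B * m) i - xstar i‖ ^ 2 ≤ C * (B * (log m / m)) :=
        sq_norm_async_iterate_sub_le hconvex hmono hlip hL hU hxstar hnash hP hD hr hK hR hM hεpos
          hgap hB hsch hm hηε hx1 hupd hnoupd i
    _ ≤ (C + 1) * B * (B * (log m / m)) := by
        have := div_nonneg (log_natCast_nonneg m) m.cast_nonneg
        gcongr
        nlinarith
    _ = (C + 1) * B ^ 3 * log ((B * m : ℕ) / B : ℝ) / (B * m : ℕ) := by
        rw [hlog]; push_cast; field_simp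

/-- Theorem 1: last-iterate convergence of first-order asynchronous projected
gradient play. Under strong monotonicity in own variables, Lipschitz cross
effects, quasidominance (with gap `ε > 0`), compact action sets of diameter `≤ D`
and gradients bounded by `U`, there is a constant `C > 0` (independent of `T`,
`B`, the update schedules and the initialization) such that for any partial
asynchronism bound `B`, any schedules, any horizon `T` a multiple of `B` with
`T ≥ 2B` and step size `η = B ln(T/B)/(εT)`, the iterates satisfy
`max_i ‖x_{i,T} - x_i*‖² ≤ C B³ ln(T/B) / T`. -/
theorem firstOrder_asynchronous_last_iterate_convergence {N d : ℕ} [NeZero N]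
    (𝒳 : Fin N → Set (EuclideanSpace ℝ (Fin d)))
    (hclosed : ∀ i, IsClosed (𝒳 i)) (hconvex : ∀ i, Convex ℝ (𝒳 i))
    (hcompact : ∀ i, IsCompact (𝒳 i))
    (D : ℝ) (hD : ∀ i, ∀ z ∈ 𝒳 i, ∀ w ∈ 𝒳 i, ‖z - w‖ ≤ D)
    (G : Fin N → (Fin N → EuclideanSpace ℝ (Fin d)) → EuclideanSpace ℝ (Fin d))
    (μ : Fin N → ℝ) (hμ : ∀ i, 0 < μ i)
    (hmono : ∀ i (x : Fin N → EuclideanSpace ℝ (Fin d)), (∀ j, x j ∈ 𝒳 j) →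
      ∀ yi ∈ 𝒳 i, μ i * ‖x i - yi‖ ^ 2 ≤ ⟪G i x - G i (Function.update x i yi), x i - yi⟫)
    (L : Fin N → Fin N → ℝ) (hL : ∀ i j, 0 ≤ L i j)
    (hlip : ∀ i j (x : Fin N → EuclideanSpace ℝ (Fin d)), (∀ k, x k ∈ 𝒳 k) →
      ∀ yj ∈ 𝒳 j, ‖G i x - G i (Function.update x j yj)‖ ≤ L i j * ‖x j - yj‖)
    (U : ℝ)
    (hU : ∀ i (x : Fin N → EuclideanSpace ℝ (Fin d)), (∀ j, x j ∈ 𝒳 j) → ‖G i x‖ ≤ U)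
    (xstar : Fin N → EuclideanSpace ℝ (Fin d)) (hxstar : ∀ i, xstar i ∈ 𝒳 i)
    (hnash : ∀ i, ∀ z ∈ 𝒳 i, 0 ≤ ⟪G i xstar, z - xstar i⟫)
    (r : Fin N → ℝ) (hr : ∀ i, 0 < r i)
    (hq : ∀ i, ∑ j ∈ Finset.univ.erase i, r j * L i j < r i * μ i)
    (ε : ℝ)
    (hεdef : ε = Finset.univ.inf' Finset.univ_nonempty
      (fun i => μ i - (1 / r i) * ∑ j ∈ Finset.univ.erase i, r j * L i j))
    (hεpos : 0 < ε)
    (P : Fin N → EuclideanSpace ℝ (Fin d) → EuclideanSpace ℝ (Fin d))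
    (hPmem : ∀ i y, P i y ∈ 𝒳 i)
    (hPproj : ∀ i y, ∀ z ∈ 𝒳 i, ‖y - P i y‖ ≤ ‖y - z‖) :
    ∃ C > (0 : ℝ), ∀ (B : ℕ), 1 ≤ B →
      ∀ 𝕋 : Fin N → Set ℕ,
        (∀ i t, ∃ s ∈ 𝕋 i, t ≤ s ∧ s < t + B) →
      ∀ T : ℕ, B ∣ T → 2 * B ≤ T →
      ∀ η : ℝ, η = (B : ℝ) * Real.log ((T : ℝ) / (B : ℝ)) / (ε * (T : ℝ)) →
      ∀ x : ℕ → Fin N → EuclideanSpace ℝ (Fin d),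
        (∀ i, x 1 i ∈ 𝒳 i) →
        (∀ t, 1 ≤ t → ∀ i, t ∈ 𝕋 i →
          x (t + 1) i = P i (x t i - η • G i (x t))) →
        (∀ t, 1 ≤ t → ∀ i, t ∉ 𝕋 i → x (t + 1) i = x t i) →
      ∀ i, ‖x T i - xstar i‖ ^ 2 ≤
        C * (B : ℝ) ^ 3 * Real.log ((T : ℝ) / (B : ℝ)) / (T : ℝ) :=
  firstOrder_asynchronous_last_iterate_convergence_general 𝒳 hconvex D hD G μ hμ hmono L hL hlip U
    hU xstar hxstar hnash r hr ε hεdef hεpos P hPmem hPproj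
end

section
/- One-window descent inequality for the first-order algorithm (equation leading to Theorem 1). Under the game setup below, with the additional assumptions: each 𝒳_i compact with diameter at most D; ‖G_i(x)‖ ≤ U for all x ∈ ∏_j 𝒳_j; x* satisfies the Nash variational inequality ⟨G_i(x*), z − x_i*⟩ ≥ 0 for all z ∈ 𝒳_i; quasidominance holds with witness r and ε := min_i (μ_i − (1/r_i)Σ_{j≠i} r_j L_{ij}) > 0. Fix an integer B ≥ 1 and update-time sets 𝕋^i ⊆ ℕ such that every interval [t, t+B) contains at least one element of each 𝕋^i. Let the iterates be x_{i,s+1} = P_{𝒳_i}(x_{i,s} − η·G_i(x_s)) if s ∈ 𝕋^i and x_{i,s+1} = x_{i,s} otherwise, with step size η > 0 satisfying 2ηBμ_i ≤ 1 for all i. Define the Lyapunov function V_s = max_i ‖x_{i,s} − x_i*‖²/r_i², r_min = min_i r_i, and c₀ = max_i (U² + L_{ii}DU + 2DU·Σ_{j≠i} L_{ij})/r_i². Then for every t, V_{t+B} ≤ (1 − 2ηε)V_t + η²·B·U²/r_min² + η²·B²·c₀. -/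
/-!
An update of agent `i` is a projected gradient step. Since the projection is nonexpansive toward
`xstar i`, strong monotonicity in the own variable, the Lipschitz cross effects and the Nash
inequality give `‖x_{i,s+1} - xstar i‖² ≤ (1 - 2ηε) r_i² V_s + η²U²`, where quasidominance absorbs
the cross terms into the weighted max-distance `V_s`. In particular `V` grows by at most
`η²U²/r_min²` per step. Every agent updates at least once in `[t, t + B)`, and after its first
update there its weighted error stays below `(1 - 2ηε) V_t + k η²U²/r_min²` at time `t + k`,
which at `k = B` is the bound.
-/

open scoped RealInnerProductSpace

open Finset

section Projection

variable {E : Type*} [NormedAddCommGroup E] [InnerProductSpace ℝ E]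

theorem norm_sub_le_of_forall_norm_sub_le {K : Set E} (hK : Convex ℝ K) {y p z : E}
    (hp : p ∈ K) (hnear : ∀ w ∈ K, ‖y - p‖ ≤ ‖y - w‖) (hz : z ∈ K) : ‖p - z‖ ≤ ‖y - z‖ := by
  have : Nonempty K := ⟨⟨p, hp⟩⟩
  have hinf : ‖y - p‖ = ⨅ w : K, ‖y - w‖ :=
    le_antisymm (le_ciInf fun w => hnear w w.2)
      (ciInf_le ⟨0, Set.forall_mem_range.2 fun _ => norm_nonneg _⟩ (⟨p, hp⟩ : K))
  have hvi : ⟪y - p, z - p⟫ ≤ 0 := (norm_eq_iInf_iff_real_inner_le_zero hK hp).1 hinf z hz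
  have hexp : ‖y - z‖ ^ 2 = ‖y - p‖ ^ 2 - 2 * ⟪y - p, z - p⟫ + ‖p - z‖ ^ 2 := by
    rw [show y - z = (y - p) - (z - p) by abel, norm_sub_sq_real, norm_sub_rev z p]
  exact le_of_sq_le_sq (by nlinarith [sq_nonneg ‖y - p‖]) (norm_nonneg _)

theorem sq_norm_sub_le_of_projected_step {K : Set E} (hK : Convex ℝ K) {y g p z : E} {η : ℝ}
    (hp : p ∈ K) (hnear : ∀ w ∈ K, ‖y - η • g - p‖ ≤ ‖y - η • g - w‖) (hz : z ∈ K) :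
    ‖p - z‖ ^ 2 ≤ ‖y - z‖ ^ 2 - 2 * η * ⟪g, y - z⟫ + η ^ 2 * ‖g‖ ^ 2 := by
  have h := pow_le_pow_left₀ (norm_nonneg _) (norm_sub_le_of_forall_norm_sub_le hK hp hnear hz) 2
  rwa [show y - η • g - z = (y - z) - η • g by abel, norm_sub_sq_real (y - z),
    real_inner_smul_right, norm_smul, Real.norm_eq_abs, mul_pow, sq_abs, real_inner_comm, ← mul_assoc] at h

end Projection

theorem norm_sub_le_sum_of_update {ι E F : Type*} [DecidableEq ι] [SeminormedAddCommGroup E]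
    [SeminormedAddCommGroup F] {X : ι → Set E} {g : (ι → E) → F} {L : ι → ℝ}
    (hg : ∀ a : ι → E, (∀ k, a k ∈ X k) → ∀ j, ∀ y ∈ X j,
      ‖g a - g (Function.update a j y)‖ ≤ L j * ‖a j - y‖)
    (S : Finset ι) {a b : ι → E} (ha : ∀ k, a k ∈ X k) (hb : ∀ k, b k ∈ X k)
    (hab : ∀ k ∉ S, a k = b k) : ‖g a - g b‖ ≤ ∑ j ∈ S, L j * ‖a j - b j‖ := by
  induction S using Finset.induction_on generalizing a with
  | empty =>
    obtain rfl : a = b := funext fun k => hab k (notMem_empty k)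
    simp
  | insert j S hj ih =>
    set a' := Function.update a j (b j)
    have ha' : ∀ k, a' k ∈ X k :=
      (Function.forall_update_iff a fun k v => v ∈ X k).2 ⟨hb j, fun k _ => ha k⟩
    have hrest : ‖g a' - g b‖ ≤ ∑ k ∈ S, L k * ‖a k - b k‖ := by
      refine (ih ha' fun k hk => ?_).trans_eq (sum_congr rfl fun k hk => ?_)
      · rcases eq_or_ne k j with rfl | hkj
        · simp [a']
        · simpa [a', hkj] using hab k (by simp [hkj, hk])
      · simp only [a', Function.update_of_ne (ne_of_mem_of_not_mem hk hj)]
    rw [sum_insert hj]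
    calc ‖g a - g b‖ ≤ ‖g a - g a'‖ + ‖g a' - g b‖ := norm_sub_le_norm_sub_add_norm_sub _ _ _
      _ ≤ L j * ‖a j - b j‖ + ∑ k ∈ S, L k * ‖a k - b k‖ :=
        add_le_add (hg a ha j (b j) (hb j)) hrest

section WeightedDistance

variable {ι E : Type*} [Fintype ι] [Nonempty ι] [NormedAddCommGroup E]

noncomputable def weightedSqDist (r : ι → ℝ) (y z : ι → E) : ℝ :=
  univ.sup' univ_nonempty fun i => ‖y i - z i‖ ^ 2 / r i ^ 2

theorem div_le_weightedSqDist (r : ι → ℝ) (y z : ι → E) (i : ι) :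
    ‖y i - z i‖ ^ 2 / r i ^ 2 ≤ weightedSqDist r y z :=
  le_sup' (fun i => ‖y i - z i‖ ^ 2 / r i ^ 2) (mem_univ i)

theorem weightedSqDist_nonneg (r : ι → ℝ) (y z : ι → E) : 0 ≤ weightedSqDist r y z :=
  (by positivity : (0 : ℝ) ≤ _).trans (div_le_weightedSqDist r y z (Classical.arbitrary ι))

theorem sq_norm_sub_le_weightedSqDist {r : ι → ℝ} (y z : ι → E) {i : ι} (hr : 0 < r i) :
    ‖y i - z i‖ ^ 2 ≤ r i ^ 2 * weightedSqDist r y z := by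
  rw [← div_le_iff₀' (by positivity)]
  exact div_le_weightedSqDist r y z i

theorem norm_sub_mul_norm_sub_le_weightedSqDist {r : ι → ℝ} (y z : ι → E) {i j : ι}
    (hri : 0 < r i) (hrj : 0 < r j) :
    ‖y j - z j‖ * ‖y i - z i‖ ≤ r j * r i * weightedSqDist r y z := by
  have hi := sq_norm_sub_le_weightedSqDist y z hri
  have hj := sq_norm_sub_le_weightedSqDist y z hrj
  nlinarith [mul_pos hri hrj, sq_nonneg (‖y j - z j‖ * r i - ‖y i - z i‖ * r j),
    norm_nonneg (y i - z i), norm_nonneg (y j - z j)]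

theorem sum_mul_norm_sub_le_weightedSqDist {r : ι → ℝ} (hr : ∀ j, 0 < r j) (y z : ι → E)
    {L : ι → ℝ} (hL : ∀ j, 0 ≤ L j) (s : Finset ι) (i : ι) :
    ∑ j ∈ s, L j * ‖y j - z j‖ * ‖y i - z i‖ ≤
      r i * (∑ j ∈ s, r j * L j) * weightedSqDist r y z := by
  rw [mul_sum, sum_mul]
  refine sum_le_sum fun j _ => ?_
  have := mul_le_mul_of_nonneg_left
    (norm_sub_mul_norm_sub_le_weightedSqDist y z (hr i) (hr j)) (hL j)
  linarith

end WeightedDistance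

section Game

variable {ι E : Type*} [Fintype ι] [DecidableEq ι] [NormedAddCommGroup E]
  [InnerProductSpace ℝ E] {X : ι → Set E} {G : ι → (ι → E) → E} {xstar y : ι → E}

theorem le_inner_gradient {i : ι} {μ : ℝ} {L : ι → ℝ} (hy : ∀ j, y j ∈ X j)
    (hxstar : ∀ j, xstar j ∈ X j)
    (hmono : ∀ x : ι → E, (∀ j, x j ∈ X j) → ∀ yi ∈ X i,
      μ * ‖x i - yi‖ ^ 2 ≤ ⟪G i x - G i (Function.update x i yi), x i - yi⟫)
    (hlip : ∀ j (x : ι → E), (∀ k, x k ∈ X k) → ∀ yj ∈ X j,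
      ‖G i x - G i (Function.update x j yj)‖ ≤ L j * ‖x j - yj‖)
    (hnash : ∀ z ∈ X i, 0 ≤ ⟪G i xstar, z - xstar i⟫) :
    μ * ‖y i - xstar i‖ ^ 2 - ∑ j ∈ univ.erase i, L j * ‖y j - xstar j‖ * ‖y i - xstar i‖ ≤
      ⟪G i y, y i - xstar i⟫ := by
  set u := Function.update y i (xstar i)
  have hu : ∀ k, u k ∈ X k :=
    (Function.forall_update_iff y fun k v => v ∈ X k).2 ⟨hxstar i, fun k _ => hy k⟩
  have hcross : ‖G i u - G i xstar‖ ≤ ∑ j ∈ univ.erase i, L j * ‖y j - xstar j‖ := by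
    refine (norm_sub_le_sum_of_update (fun a ha j => hlip j a ha) _ hu hxstar
      fun k hk => ?_).trans_eq (sum_congr rfl fun j hj => ?_)
    · obtain rfl : k = i := by simpa using hk
      simp [u]
    · simp only [u, Function.update_of_ne (ne_of_mem_erase hj)]
  have hcs : -(‖G i u - G i xstar‖ * ‖y i - xstar i‖) ≤ ⟪G i u - G i xstar, y i - xstar i⟫ :=
    neg_le_of_abs_le (abs_real_inner_le_norm _ _)
  have hsplit : ⟪G i y, y i - xstar i⟫ = ⟪G i y - G i u, y i - xstar i⟫ +
      ⟪G i u - G i xstar, y i - xstar i⟫ + ⟪G i xstar, y i - xstar i⟫ := by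
    rw [← inner_add_left, ← inner_add_left, sub_add_sub_cancel, sub_add_cancel]
  rw [← sum_mul, hsplit]
  linarith [hmono y hy (xstar i) (hxstar i), hnash (y i) (hy i),
    mul_le_mul_of_nonneg_right hcross (norm_nonneg (y i - xstar i))]

theorem sq_norm_projected_step_div_le [Nonempty ι] {i : ι} {μ ε η U : ℝ} {L r : ι → ℝ} {p : E}
    (hconvex : Convex ℝ (X i)) (hp : p ∈ X i)
    (hnear : ∀ w ∈ X i, ‖y i - η • G i y - p‖ ≤ ‖y i - η • G i y - w‖)
    (hy : ∀ j, y j ∈ X j) (hxstar : ∀ j, xstar j ∈ X j)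
    (hmono : ∀ x : ι → E, (∀ j, x j ∈ X j) → ∀ yi ∈ X i,
      μ * ‖x i - yi‖ ^ 2 ≤ ⟪G i x - G i (Function.update x i yi), x i - yi⟫)
    (hlip : ∀ j (x : ι → E), (∀ k, x k ∈ X k) → ∀ yj ∈ X j,
      ‖G i x - G i (Function.update x j yj)‖ ≤ L j * ‖x j - yj‖)
    (hnash : ∀ z ∈ X i, 0 ≤ ⟪G i xstar, z - xstar i⟫) (hU : ‖G i y‖ ≤ U)
    (hr : ∀ j, 0 < r j) (hL : ∀ j, 0 ≤ L j)
    (hε : ε ≤ μ - 1 / r i * ∑ j ∈ univ.erase i, r j * L j) (hη : 0 ≤ η) (hημ : 2 * η * μ ≤ 1) :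
    ‖p - xstar i‖ ^ 2 / r i ^ 2 ≤
      (1 - 2 * η * ε) * weightedSqDist r y xstar + η ^ 2 * U ^ 2 / r i ^ 2 := by
  set W := weightedSqDist r y xstar
  have hri := hr i
  have hproj := sq_norm_sub_le_of_projected_step hconvex hp hnear (hxstar i)
  have hinner := le_inner_gradient hy hxstar hmono hlip hnash
  have hcross := sum_mul_norm_sub_le_weightedSqDist hr y xstar hL (univ.erase i) i
  have hdev := sq_norm_sub_le_weightedSqDist y xstar hri
  have hq : ∑ j ∈ univ.erase i, r j * L j ≤ r i * (μ - ε) := by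
    rwa [le_sub_comm, one_div_mul_eq_div, div_le_iff₀' hri] at hε
  have hG : ‖G i y‖ ^ 2 ≤ U ^ 2 := pow_le_pow_left₀ (norm_nonneg _) hU 2
  rw [div_le_iff₀ (by positivity), add_mul, div_mul_cancel₀ _ (by positivity)]
  linarith [mul_le_mul_of_nonneg_left hinner (by positivity : (0 : ℝ) ≤ 2 * η),
    mul_le_mul_of_nonneg_left hcross (by positivity : (0 : ℝ) ≤ 2 * η),
    mul_le_mul_of_nonneg_left hq
      (by have := weightedSqDist_nonneg r y xstar; positivity : (0 : ℝ) ≤ 2 * η * r i * W),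
    mul_le_mul_of_nonneg_left hdev (by linarith : (0 : ℝ) ≤ 1 - 2 * η * μ),
    mul_le_mul_of_nonneg_left hG (sq_nonneg η)]

end Game

theorem le_add_mul_of_le_add_succ {v : ℕ → ℝ} {C : ℝ} {t : ℕ}
    (h : ∀ s, t ≤ s → v (s + 1) ≤ v s + C) (k : ℕ) : v (t + k) ≤ v t + k * C := by
  induction k with
  | zero => simp
  | succ k ih =>
    rw [← add_assoc]
    push_cast
    linarith [h (t + k) (Nat.le_add_right t k)]

section Window

variable {ι : Type*} [Fintype ι] [Nonempty ι] {f : ℕ → ι → ℝ} {T : ι → Set ℕ} {κ C : ℝ}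

theorem sup'_succ_le_add {s : ℕ} (hf0 : ∀ i, 0 ≤ f s i) (hκ1 : κ ≤ 1) (hC : 0 ≤ C)
    (hupd : ∀ i, s ∈ T i → f (s + 1) i ≤ κ * univ.sup' univ_nonempty (f s) + C)
    (hkeep : ∀ i, s ∉ T i → f (s + 1) i = f s i) :
    univ.sup' univ_nonempty (f (s + 1)) ≤ univ.sup' univ_nonempty (f s) + C := by
  refine sup'_le _ _ fun i _ => ?_
  have hfi : f s i ≤ univ.sup' univ_nonempty (f s) := le_sup' _ (mem_univ i)
  by_cases hi : s ∈ T i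
  · have := mul_le_of_le_one_left ((hf0 i).trans hfi) hκ1
    linarith [hupd i hi]
  · linarith [hkeep i hi]

theorem sup'_window_le {t B : ℕ} (hf0 : ∀ s i, 0 ≤ f s i) (hκ0 : 0 ≤ κ) (hκ1 : κ ≤ 1)
    (hC : 0 ≤ C) (hT : ∀ i, ∃ s ∈ T i, t ≤ s ∧ s < t + B)
    (hupd : ∀ s, t ≤ s → ∀ i, s ∈ T i → f (s + 1) i ≤ κ * univ.sup' univ_nonempty (f s) + C)
    (hkeep : ∀ s, t ≤ s → ∀ i, s ∉ T i → f (s + 1) i = f s i) :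
    univ.sup' univ_nonempty (f (t + B)) ≤ κ * univ.sup' univ_nonempty (f t) + B * C := by
  set V := fun s => univ.sup' univ_nonempty (f s)
  have hV : ∀ k : ℕ, V (t + k) ≤ V t + k * C := le_add_mul_of_le_add_succ fun s hs =>
    sup'_succ_le_add (hf0 s) hκ1 hC (hupd s hs) (hkeep s hs)
  have hupdated : ∀ (k : ℕ) i, (∃ s ∈ T i, t ≤ s ∧ s < t + k) →
      f (t + k) i ≤ κ * V t + k * C := by
    intro k
    induction k with
    | zero => rintro i ⟨s, -, hts, hst⟩; omega
    | succ k ih =>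
      rintro i ⟨s, hs, hts, hsk⟩
      rw [← add_assoc]
      push_cast
      by_cases hi : t + k ∈ T i
      · have := mul_le_mul_of_nonneg_left (hV k) hκ0
        have := mul_le_of_le_one_left (by positivity : (0 : ℝ) ≤ k * C) hκ1
        linarith [hupd _ (Nat.le_add_right t k) i hi]
      · have hsk' : s < t + k := lt_of_le_of_ne (Nat.lt_succ_iff.1 hsk) fun h => hi (h ▸ hs)
        linarith [hkeep _ (Nat.le_add_right t k) i hi, ih i ⟨s, hs, hts, hsk'⟩]
  exact sup'_le _ _ fun i _ => hupdated B i (hT i)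

end Window

theorem iterate_mem_of_update {ι E : Type*} {X : ι → Set E} {T : ι → Set ℕ} {P : ι → E → E}
    {v x : ℕ → ι → E} (hPmem : ∀ i y, P i y ∈ X i) (hx1 : ∀ i, x 1 i ∈ X i)
    (hupd : ∀ s, 1 ≤ s → ∀ i, s ∈ T i → x (s + 1) i = P i (v s i))
    (hkeep : ∀ s, 1 ≤ s → ∀ i, s ∉ T i → x (s + 1) i = x s i) :
    ∀ s, 1 ≤ s → ∀ i, x s i ∈ X i := by
  intro s hs
  induction s, hs using Nat.le_induction with
  | base => exact hx1
  | succ s hs ih =>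
    intro i
    by_cases hi : s ∈ T i
    · rw [hupd s hs i hi]; exact hPmem i _
    · rw [hkeep s hs i hi]; exact ih i

theorem firstOrder_one_window_descent_general {N d : ℕ} [NeZero N]
    (𝒳 : Fin N → Set (EuclideanSpace ℝ (Fin d)))
    (hconvex : ∀ i, Convex ℝ (𝒳 i))
    (D : ℝ) (hD : ∀ i, ∀ z ∈ 𝒳 i, ∀ w ∈ 𝒳 i, ‖z - w‖ ≤ D)
    (G : Fin N → (Fin N → EuclideanSpace ℝ (Fin d)) → EuclideanSpace ℝ (Fin d))
    (μ : Fin N → ℝ) (hμ : ∀ i, 0 < μ i)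
    (hmono : ∀ i (x : Fin N → EuclideanSpace ℝ (Fin d)), (∀ j, x j ∈ 𝒳 j) →
      ∀ yi ∈ 𝒳 i, μ i * ‖x i - yi‖ ^ 2 ≤ ⟪G i x - G i (Function.update x i yi), x i - yi⟫)
    (L : Fin N → Fin N → ℝ) (hL : ∀ i j, 0 ≤ L i j)
    (hlip : ∀ i j (x : Fin N → EuclideanSpace ℝ (Fin d)), (∀ k, x k ∈ 𝒳 k) →
      ∀ yj ∈ 𝒳 j, ‖G i x - G i (Function.update x j yj)‖ ≤ L i j * ‖x j - yj‖)
    (U : ℝ)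
    (hU : ∀ i (x : Fin N → EuclideanSpace ℝ (Fin d)), (∀ j, x j ∈ 𝒳 j) → ‖G i x‖ ≤ U)
    (xstar : Fin N → EuclideanSpace ℝ (Fin d)) (hxstar : ∀ i, xstar i ∈ 𝒳 i)
    (hnash : ∀ i, ∀ z ∈ 𝒳 i, 0 ≤ ⟪G i xstar, z - xstar i⟫)
    (r : Fin N → ℝ) (hr : ∀ i, 0 < r i)
    (ε : ℝ)
    (hεdef : ε = Finset.univ.inf' Finset.univ_nonempty
      (fun i => μ i - (1 / r i) * ∑ j ∈ Finset.univ.erase i, r j * L i j))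
    (hεpos : 0 < ε)
    (P : Fin N → EuclideanSpace ℝ (Fin d) → EuclideanSpace ℝ (Fin d))
    (hPmem : ∀ i y, P i y ∈ 𝒳 i)
    (hPproj : ∀ i y, ∀ z ∈ 𝒳 i, ‖y - P i y‖ ≤ ‖y - z‖)
    (B : ℕ) (hB : 1 ≤ B)
    (𝕋 : Fin N → Set ℕ)
    (hasync : ∀ i t, ∃ s ∈ 𝕋 i, t ≤ s ∧ s < t + B)
    (η : ℝ) (hη : 0 < η) (hηB : ∀ i, 2 * η * (B : ℝ) * μ i ≤ 1)
    (x : ℕ → Fin N → EuclideanSpace ℝ (Fin d))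
    (hx1 : ∀ i, x 1 i ∈ 𝒳 i)
    (hupd : ∀ s, 1 ≤ s → ∀ i, s ∈ 𝕋 i →
      x (s + 1) i = P i (x s i - η • G i (x s)))
    (hkeep : ∀ s, 1 ≤ s → ∀ i, s ∉ 𝕋 i → x (s + 1) i = x s i) :
    ∀ t, 1 ≤ t →
      Finset.univ.sup' Finset.univ_nonempty
          (fun i => ‖x (t + B) i - xstar i‖ ^ 2 / r i ^ 2) ≤
        (1 - 2 * η * ε) * Finset.univ.sup' Finset.univ_nonempty
            (fun i => ‖x t i - xstar i‖ ^ 2 / r i ^ 2) +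
        η ^ 2 * (B : ℝ) * U ^ 2 /
          (Finset.univ.inf' Finset.univ_nonempty r) ^ 2 +
        η ^ 2 * (B : ℝ) ^ 2 * Finset.univ.sup' Finset.univ_nonempty
          (fun i => (U ^ 2 + L i i * D * U +
            2 * D * U * ∑ j ∈ Finset.univ.erase i, L i j) / r i ^ 2) := by
  intro t ht
  have hmem := iterate_mem_of_update hPmem hx1 hupd hkeep
  have hε : ∀ i, ε ≤ μ i - 1 / r i * ∑ j ∈ univ.erase i, r j * L i j := fun i =>
    hεdef ▸ inf'_le _ (mem_univ i)
  have hεμ : ε ≤ μ 0 := (hε 0).trans <| sub_le_self _ <| mul_nonneg (by have := hr 0; positivity)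
    (sum_nonneg fun j _ => mul_nonneg (hr j).le (hL 0 j))
  have hημ : ∀ i, 2 * η * μ i ≤ 1 := fun i => by
    have hB' : (1 : ℝ) ≤ B := by exact_mod_cast hB
    nlinarith [hηB i, mul_nonneg (mul_pos hη (hμ i)).le (sub_nonneg.2 hB')]
  have hrmin : 0 < univ.inf' univ_nonempty r := (lt_inf'_iff _).2 fun i _ => hr i
  have hc₀ : 0 ≤ univ.sup' univ_nonempty fun i => (U ^ 2 + L i i * D * U +
      2 * D * U * ∑ j ∈ univ.erase i, L i j) / r i ^ 2 := by
    refine le_sup'_of_le _ (mem_univ (0 : Fin N)) ?_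
    have := (norm_nonneg _).trans (hU 0 xstar hxstar)
    have := (norm_nonneg _).trans (hD 0 _ (hxstar 0) _ (hxstar 0))
    have := hL 0 0
    have := sum_nonneg fun j (_ : j ∈ univ.erase 0) => hL 0 j
    positivity
  have hκ : 2 * η * ε ≤ 1 := (mul_le_mul_of_nonneg_left hεμ (by positivity)).trans (hημ 0)
  refine (sup'_window_le (T := 𝕋) (f := fun s i => ‖x s i - xstar i‖ ^ 2 / r i ^ 2)
    (κ := 1 - 2 * η * ε) (C := η ^ 2 * U ^ 2 / univ.inf' univ_nonempty r ^ 2)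
    (fun s i => by positivity) (by linarith) (sub_le_self _ (by positivity)) (by positivity)
    (hasync · t) (fun s hs i hi => ?_) (fun s hs i hi => ?_)).trans ?_
  · rw [hupd s (ht.trans hs) i hi]
    refine (sq_norm_projected_step_div_le (hconvex i) (hPmem i _) (hPproj i _)
      (hmem s (ht.trans hs)) hxstar (hmono i) (hlip i) (hnash i) (hU i _ (hmem s (ht.trans hs)))
      hr (hL i) (hε i) hη.le (hημ i)).trans (add_le_add le_rfl ?_)
    exact div_le_div_of_nonneg_left (by positivity) (pow_pos hrmin 2)
      (pow_le_pow_left₀ hrmin.le (inf'_le _ (mem_univ i)) 2)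
  · simp only [hkeep s (ht.trans hs) i hi]
  · rw [show (B : ℝ) * (η ^ 2 * U ^ 2 / univ.inf' univ_nonempty r ^ 2) =
      η ^ 2 * B * U ^ 2 / univ.inf' univ_nonempty r ^ 2 by ring]
    exact le_add_of_nonneg_right (mul_nonneg (by positivity) hc₀)

/-- One-window descent inequality for the first-order asynchronous algorithm:
with `V_s = max_i ‖x_{i,s} - x_i*‖²/r_i²`, `r_min = min_i r_i` and
`c₀ = max_i (U² + L_{ii} D U + 2 D U ∑_{j≠i} L_{ij}) / r_i²`, one has
`V_{t+B} ≤ (1 - 2ηε) V_t + η² B U² / r_min² + η² B² c₀`. -/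
theorem firstOrder_one_window_descent {N d : ℕ} [NeZero N]
    (𝒳 : Fin N → Set (EuclideanSpace ℝ (Fin d)))
    (hclosed : ∀ i, IsClosed (𝒳 i)) (hconvex : ∀ i, Convex ℝ (𝒳 i))
    (hcompact : ∀ i, IsCompact (𝒳 i))
    (D : ℝ) (hD : ∀ i, ∀ z ∈ 𝒳 i, ∀ w ∈ 𝒳 i, ‖z - w‖ ≤ D)
    (G : Fin N → (Fin N → EuclideanSpace ℝ (Fin d)) → EuclideanSpace ℝ (Fin d))
    (μ : Fin N → ℝ) (hμ : ∀ i, 0 < μ i)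
    (hmono : ∀ i (x : Fin N → EuclideanSpace ℝ (Fin d)), (∀ j, x j ∈ 𝒳 j) →
      ∀ yi ∈ 𝒳 i, μ i * ‖x i - yi‖ ^ 2 ≤ ⟪G i x - G i (Function.update x i yi), x i - yi⟫)
    (L : Fin N → Fin N → ℝ) (hL : ∀ i j, 0 ≤ L i j)
    (hlip : ∀ i j (x : Fin N → EuclideanSpace ℝ (Fin d)), (∀ k, x k ∈ 𝒳 k) →
      ∀ yj ∈ 𝒳 j, ‖G i x - G i (Function.update x j yj)‖ ≤ L i j * ‖x j - yj‖)
    (U : ℝ)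
    (hU : ∀ i (x : Fin N → EuclideanSpace ℝ (Fin d)), (∀ j, x j ∈ 𝒳 j) → ‖G i x‖ ≤ U)
    (xstar : Fin N → EuclideanSpace ℝ (Fin d)) (hxstar : ∀ i, xstar i ∈ 𝒳 i)
    (hnash : ∀ i, ∀ z ∈ 𝒳 i, 0 ≤ ⟪G i xstar, z - xstar i⟫)
    (r : Fin N → ℝ) (hr : ∀ i, 0 < r i)
    (hq : ∀ i, ∑ j ∈ Finset.univ.erase i, r j * L i j < r i * μ i)
    (ε : ℝ)
    (hεdef : ε = Finset.univ.inf' Finset.univ_nonempty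
      (fun i => μ i - (1 / r i) * ∑ j ∈ Finset.univ.erase i, r j * L i j))
    (hεpos : 0 < ε)
    (P : Fin N → EuclideanSpace ℝ (Fin d) → EuclideanSpace ℝ (Fin d))
    (hPmem : ∀ i y, P i y ∈ 𝒳 i)
    (hPproj : ∀ i y, ∀ z ∈ 𝒳 i, ‖y - P i y‖ ≤ ‖y - z‖)
    (B : ℕ) (hB : 1 ≤ B)
    (𝕋 : Fin N → Set ℕ)
    (hasync : ∀ i t, ∃ s ∈ 𝕋 i, t ≤ s ∧ s < t + B)
    (η : ℝ) (hη : 0 < η) (hηB : ∀ i, 2 * η * (B : ℝ) * μ i ≤ 1)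
    (x : ℕ → Fin N → EuclideanSpace ℝ (Fin d))
    (hx1 : ∀ i, x 1 i ∈ 𝒳 i)
    (hupd : ∀ s, 1 ≤ s → ∀ i, s ∈ 𝕋 i →
      x (s + 1) i = P i (x s i - η • G i (x s)))
    (hkeep : ∀ s, 1 ≤ s → ∀ i, s ∉ 𝕋 i → x (s + 1) i = x s i) :
    ∀ t, 1 ≤ t →
      Finset.univ.sup' Finset.univ_nonempty
          (fun i => ‖x (t + B) i - xstar i‖ ^ 2 / r i ^ 2) ≤
        (1 - 2 * η * ε) * Finset.univ.sup' Finset.univ_nonempty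
            (fun i => ‖x t i - xstar i‖ ^ 2 / r i ^ 2) +
        η ^ 2 * (B : ℝ) * U ^ 2 /
          (Finset.univ.inf' Finset.univ_nonempty r) ^ 2 +
        η ^ 2 * (B : ℝ) ^ 2 * Finset.univ.sup' Finset.univ_nonempty
          (fun i => (U ^ 2 + L i i * D * U +
            2 * D * U * ∑ j ∈ Finset.univ.erase i, L i j) / r i ^ 2) :=
  firstOrder_one_window_descent_general 𝒳 hconvex D hD G μ hμ hmono L hL hlip U hU xstar hxstar
    hnash r hr ε hεdef hεpos P hPmem hPproj B hB 𝕋 hasync η hη hηB x hx1 hupd hkeep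
end

section
/- Under the game setup below, assume additionally: each 𝒳_i contains the closed ball of radius R > 0 centered at the origin, satisfies ‖z‖ ≤ D for all z ∈ 𝒳_i, and has diameter at most D; ‖G_i(x*)‖ ≤ U; 0 < δ < R; and x* ∈ ∏_i 𝒳_i satisfies the Nash variational inequality ⟨G_i(x*), z − x_i*⟩ ≥ 0 for all z ∈ 𝒳_i and all i. Define the shrunk equilibrium x*_{δ,i} = (1 − δ/R)·x_i* and L_i = Σ_{j=1}^{N} L_{ij}. Then for every x ∈ ∏_j 𝒳_j and every agent i, ⟨x_i − x*_{δ,i}, G_i(x)⟩ ≥ μ_i‖x_i − x*_{δ,i}‖² − ‖x_i − x*_{δ,i}‖·Σ_{j≠i} L_{ij}‖x_j − x*_{δ,j}‖ − δ·D²·L_i/R − δ·D·U/R. -/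
open scoped RealInnerProductSpace

lemma lip_telescope_aux {N d : ℕ} (𝒳 : Fin N → Set (EuclideanSpace ℝ (Fin d)))
    (G : Fin N → (Fin N → EuclideanSpace ℝ (Fin d)) → EuclideanSpace ℝ (Fin d))
    (L : Fin N → Fin N → ℝ)
    (hlip : ∀ i j (x : Fin N → EuclideanSpace ℝ (Fin d)), (∀ k, x k ∈ 𝒳 k) →
      ∀ yj ∈ 𝒳 j, ‖G i x - G i (Function.update x j yj)‖ ≤ L i j * ‖x j - yj‖)
    (i : Fin N) (y z : Fin N → EuclideanSpace ℝ (Fin d))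
    (hy : ∀ k, y k ∈ 𝒳 k) (hz : ∀ k, z k ∈ 𝒳 k) :
    ‖G i y - G i z‖ ≤ ∑ j, L i j * ‖y j - z j‖ := by
  classical
  have key : ∀ S : Finset (Fin N),
      ‖G i y - G i (fun j => if j ∈ S then z j else y j)‖ ≤
        ∑ j ∈ S, L i j * ‖y j - z j‖ := by
    intro S
    induction S using Finset.induction_on with
    | empty => simp
    | @insert a S ha ih =>
      set w : Fin N → EuclideanSpace ℝ (Fin d) := fun j => if j ∈ S then z j else y j with hw
      have hwmem : ∀ k, w k ∈ 𝒳 k := by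
        intro k
        by_cases h : k ∈ S <;> simp [hw, h, hy k, hz k]
      have heq : (fun j => if j ∈ insert a S then z j else y j) =
          Function.update w a (z a) := by
        funext k
        by_cases h : k = a
        · subst h; simp [hw, Function.update_self, ha]
        · simp [hw, Function.update_of_ne h, Finset.mem_insert, h]
      have htri : ‖G i y - G i (fun j => if j ∈ insert a S then z j else y j)‖ ≤
          ‖G i y - G i w‖ + ‖G i w - G i (Function.update w a (z a))‖ := by
        rw [heq]
        exact norm_sub_le_norm_sub_add_norm_sub _ _ _
      have hstep : ‖G i w - G i (Function.update w a (z a))‖ ≤ L i a * ‖y a - z a‖ := by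
        have := hlip i a w hwmem (z a) (hz a)
        have hwa : w a = y a := by simp [hw, ha]
        rwa [hwa] at this
      calc ‖G i y - G i (fun j => if j ∈ insert a S then z j else y j)‖
          ≤ ‖G i y - G i w‖ + ‖G i w - G i (Function.update w a (z a))‖ := htri
        _ ≤ (∑ j ∈ S, L i j * ‖y j - z j‖) + L i a * ‖y a - z a‖ := add_le_add ih hstep
        _ = ∑ j ∈ insert a S, L i j * ‖y j - z j‖ := by
            rw [Finset.sum_insert ha]; ring
  have := key Finset.univ
  have hzeq : (fun j => if j ∈ (Finset.univ : Finset (Fin N)) then z j else y j) = z := by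
    funext k; simp
  rwa [hzeq] at this

/-- Key inequality for the shrunk equilibrium `x*_δ = (1 - δ/R) x*` in
zeroth-order asynchronous learning (eq. ZO:t7): for every feasible profile `x`
and every agent `i`,
`⟪x i - x*_{δ,i}, G i x⟫ ≥ μ_i ‖x i - x*_{δ,i}‖² - ‖x i - x*_{δ,i}‖ ∑_{j≠i} L_{ij} ‖x j - x*_{δ,j}‖ - δ D² L_i / R - δ D U / R`,
where `L_i = ∑_j L_{ij}`. -/
theorem shrunk_equilibrium_gradient_lower_bound {N d : ℕ}
    (𝒳 : Fin N → Set (EuclideanSpace ℝ (Fin d)))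
    (hclosed : ∀ i, IsClosed (𝒳 i)) (hconvex : ∀ i, Convex ℝ (𝒳 i))
    (R : ℝ) (hR : 0 < R)
    (hball : ∀ i, Metric.closedBall (0 : EuclideanSpace ℝ (Fin d)) R ⊆ 𝒳 i)
    (D : ℝ) (hDbound : ∀ i, ∀ z ∈ 𝒳 i, ‖z‖ ≤ D)
    (hDdiam : ∀ i, ∀ z ∈ 𝒳 i, ∀ w ∈ 𝒳 i, ‖z - w‖ ≤ D)
    (G : Fin N → (Fin N → EuclideanSpace ℝ (Fin d)) → EuclideanSpace ℝ (Fin d))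
    (μ : Fin N → ℝ) (hμ : ∀ i, 0 < μ i)
    (hmono : ∀ i (x : Fin N → EuclideanSpace ℝ (Fin d)), (∀ j, x j ∈ 𝒳 j) →
      ∀ yi ∈ 𝒳 i, μ i * ‖x i - yi‖ ^ 2 ≤ ⟪G i x - G i (Function.update x i yi), x i - yi⟫)
    (L : Fin N → Fin N → ℝ) (hL : ∀ i j, 0 ≤ L i j)
    (hlip : ∀ i j (x : Fin N → EuclideanSpace ℝ (Fin d)), (∀ k, x k ∈ 𝒳 k) →
      ∀ yj ∈ 𝒳 j, ‖G i x - G i (Function.update x j yj)‖ ≤ L i j * ‖x j - yj‖)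
    (U : ℝ)
    (xstar : Fin N → EuclideanSpace ℝ (Fin d)) (hxstar : ∀ i, xstar i ∈ 𝒳 i)
    (hU : ∀ i, ‖G i xstar‖ ≤ U)
    (hnash : ∀ i, ∀ z ∈ 𝒳 i, 0 ≤ ⟪G i xstar, z - xstar i⟫)
    (δ : ℝ) (hδ : 0 < δ) (hδR : δ < R) :
    ∀ (x : Fin N → EuclideanSpace ℝ (Fin d)), (∀ j, x j ∈ 𝒳 j) → ∀ i,
      μ i * ‖x i - (1 - δ / R) • xstar i‖ ^ 2 -
        ‖x i - (1 - δ / R) • xstar i‖ *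
          ∑ j ∈ Finset.univ.erase i, L i j * ‖x j - (1 - δ / R) • xstar j‖ -
        δ * D ^ 2 * (∑ j, L i j) / R - δ * D * U / R ≤
      ⟪x i - (1 - δ / R) • xstar i, G i x⟫ := by
  classical
  intro x hx i
  set xδ : Fin N → EuclideanSpace ℝ (Fin d) := fun j => (1 - δ / R) • xstar j with hxδdef
  have hc2 : 0 ≤ δ / R := div_nonneg hδ.le hR.le
  have hc1 : 0 ≤ 1 - δ / R := by
    have : δ / R ≤ 1 := (div_le_one hR).mpr hδR.le
    linarith
  have h0mem : ∀ j, (0 : EuclideanSpace ℝ (Fin d)) ∈ 𝒳 j := fun j =>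
    hball j (by simp [hR.le])
  have hxδmem : ∀ j, xδ j ∈ 𝒳 j := by
    intro j
    have := hconvex j (hxstar j) (h0mem j) hc1 hc2 (by ring)
    simpa [hxδdef] using this
  have hD0 : 0 ≤ D := le_trans (norm_nonneg _) (hDbound i _ (hxstar i))
  have hU0 : 0 ≤ U := le_trans (norm_nonneg _) (hU i)
  have hdiff : ∀ j, ‖xstar j - xδ j‖ ≤ δ * D / R := by
    intro j
    have h1 : xstar j - xδ j = (δ / R) • xstar j := by
      show xstar j - (1 - δ / R) • xstar j = (δ / R) • xstar j
      rw [sub_smul, one_smul, sub_sub_cancel]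
    rw [h1, norm_smul, Real.norm_of_nonneg hc2]
    calc δ / R * ‖xstar j‖ ≤ δ / R * D := by
          exact mul_le_mul_of_nonneg_left (hDbound j _ (hxstar j)) hc2
      _ = δ * D / R := by ring
  have haD : ‖x i - xδ i‖ ≤ D := hDdiam i _ (hx i) _ (hxδmem i)
  have hA0 : 0 ≤ ‖x i - xδ i‖ := norm_nonneg _
  set y : Fin N → EuclideanSpace ℝ (Fin d) := Function.update x i (xδ i) with hydef
  have hy : ∀ k, y k ∈ 𝒳 k := by
    intro k
    by_cases h : k = i
    · subst h; simpa [hydef, Function.update_self] using hxδmem k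
    · simpa [hydef, Function.update_of_ne h] using hx k
  -- Term 1 : strong monotonicity
  have hT1 : μ i * ‖x i - xδ i‖ ^ 2 ≤ ⟪G i x - G i y, x i - xδ i⟫ :=
    hmono i x hx (xδ i) (hxδmem i)
  -- Term 2 : Lipschitz telescoping
  set Λ : ℝ := ∑ j, L i j with hΛ
  have hΛ0 : 0 ≤ Λ := Finset.sum_nonneg fun j _ => hL i j
  set S : ℝ := ∑ j ∈ Finset.univ.erase i, L i j * ‖x j - xδ j‖ with hS
  have hS0 : 0 ≤ S :=
    Finset.sum_nonneg fun j _ => mul_nonneg (hL i j) (norm_nonneg _)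
  have hnormGy : ‖G i y - G i xstar‖ ≤ ∑ j, L i j * ‖y j - xstar j‖ :=
    lip_telescope_aux 𝒳 G L hlip i y xstar hy hxstar
  have hsum : ∑ j, L i j * ‖y j - xstar j‖ ≤ S + (δ * D / R) * Λ := by
    have hsplit : ∑ j, L i j * ‖y j - xstar j‖ =
        L i i * ‖y i - xstar i‖ + ∑ j ∈ Finset.univ.erase i, L i j * ‖y j - xstar j‖ :=
      (Finset.add_sum_erase _ _ (Finset.mem_univ i)).symm
    have hterm_i : L i i * ‖y i - xstar i‖ ≤ L i i * (δ * D / R) := by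
      apply mul_le_mul_of_nonneg_left _ (hL i i)
      rw [hydef, Function.update_self, norm_sub_rev]
      exact hdiff i
    have hterm_j : ∀ j ∈ Finset.univ.erase i,
        L i j * ‖y j - xstar j‖ ≤ L i j * ‖x j - xδ j‖ + L i j * (δ * D / R) := by
      intro j hj
      have hji : j ≠ i := Finset.ne_of_mem_erase hj
      have hyj : y j = x j := Function.update_of_ne hji _ _
      have : ‖x j - xstar j‖ ≤ ‖x j - xδ j‖ + ‖xδ j - xstar j‖ :=
        norm_sub_le_norm_sub_add_norm_sub _ _ _
      have h2 : ‖xδ j - xstar j‖ ≤ δ * D / R := by rw [norm_sub_rev]; exact hdiff j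
      calc L i j * ‖y j - xstar j‖ = L i j * ‖x j - xstar j‖ := by rw [hyj]
        _ ≤ L i j * (‖x j - xδ j‖ + δ * D / R) := by
            apply mul_le_mul_of_nonneg_left _ (hL i j); linarith
        _ = L i j * ‖x j - xδ j‖ + L i j * (δ * D / R) := by ring
    have hsumj : ∑ j ∈ Finset.univ.erase i, L i j * ‖y j - xstar j‖ ≤
        S + ∑ j ∈ Finset.univ.erase i, L i j * (δ * D / R) := by
      rw [hS, ← Finset.sum_add_distrib]
      exact Finset.sum_le_sum hterm_j
    have hΛsplit : L i i * (δ * D / R) + ∑ j ∈ Finset.univ.erase i, L i j * (δ * D / R)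
        = (δ * D / R) * Λ := by
      rw [hΛ, ← Finset.add_sum_erase _ _ (Finset.mem_univ i), mul_add, Finset.mul_sum]
      congr 1
      · ring
      · exact Finset.sum_congr rfl fun j _ => by ring
    calc ∑ j, L i j * ‖y j - xstar j‖
        = L i i * ‖y i - xstar i‖ + ∑ j ∈ Finset.univ.erase i, L i j * ‖y j - xstar j‖ := hsplit
      _ ≤ L i i * (δ * D / R) + (S + ∑ j ∈ Finset.univ.erase i, L i j * (δ * D / R)) :=
          add_le_add hterm_i hsumj
      _ = S + (δ * D / R) * Λ := by rw [← hΛsplit]; ring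
  have hT2 : -(‖x i - xδ i‖ * S + δ * D ^ 2 * Λ / R) ≤ ⟪G i y - G i xstar, x i - xδ i⟫ := by
    have habs := abs_real_inner_le_norm (G i y - G i xstar) (x i - xδ i)
    have h1 : ‖G i y - G i xstar‖ * ‖x i - xδ i‖ ≤ (S + (δ * D / R) * Λ) * ‖x i - xδ i‖ :=
      mul_le_mul_of_nonneg_right (le_trans hnormGy hsum) hA0
    have h2 : (δ * D / R) * Λ * ‖x i - xδ i‖ ≤ (δ * D / R) * Λ * D :=
      mul_le_mul_of_nonneg_left haD (mul_nonneg (by positivity) hΛ0)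
    have h3 : (δ * D / R) * Λ * D = δ * D ^ 2 * Λ / R := by ring
    have := neg_abs_le ⟪G i y - G i xstar, x i - xδ i⟫
    nlinarith [h1, h2]
  -- Term 3 : Nash VI + gradient bound
  have hT3 : -(δ * D * U / R) ≤ ⟪G i xstar, x i - xδ i⟫ := by
    have hsplit : ⟪G i xstar, x i - xδ i⟫ =
        ⟪G i xstar, x i - xstar i⟫ + ⟪G i xstar, xstar i - xδ i⟫ := by
      rw [← inner_add_right]
      congr 1
      abel
    have h1 : 0 ≤ ⟪G i xstar, x i - xstar i⟫ := hnash i (x i) (hx i)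
    have habs := abs_real_inner_le_norm (G i xstar) (xstar i - xδ i)
    have h2 : ‖G i xstar‖ * ‖xstar i - xδ i‖ ≤ U * (δ * D / R) :=
      mul_le_mul (hU i) (hdiff i) (norm_nonneg _) hU0
    have h3 := neg_abs_le ⟪G i xstar, xstar i - xδ i⟫
    have h4 : U * (δ * D / R) = δ * D * U / R := by ring
    rw [hsplit]
    linarith
  -- combine
  have hdecomp : ⟪x i - xδ i, G i x⟫ =
      ⟪G i x - G i y, x i - xδ i⟫ + ⟪G i y - G i xstar, x i - xδ i⟫ +
        ⟪G i xstar, x i - xδ i⟫ := by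
    rw [real_inner_comm]
    simp only [inner_sub_left]
    ring
  rw [hdecomp]
  linarith
end
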